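/- arXiv:1701.09109 — 6 statements merged into one kernel-verified Lean document; each statement's English description precedes it below -/
import Mathlib

section
/- Let X be a conjugacy class of a finite group G and let r: X×X → X×X be given by r(x,y) = (xyx⁻¹, x). Then the center of the structure group G(X,r) has finite index in G(X,r); in particular, every conjugacy class of G(X,r) is finite. -/
universe u

namespace YBE

variable {X : Type u}

/-- `r` acting on the first two coordinates of `X × X × X`. -/
def r12 (r : X × X → X × X) : X × X × X → X × X × X :=
  fun p => ((r (p.1, p.2.1)).1, (r (p.1, p.2.1)).2, p.2.2)

/-- `r` acting on the last two coordinates of `X × X × X`. -/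
def r23 (r : X × X → X × X) : X × X × X → X × X × X :=
  fun p => (p.1, r p.2)

/-- The braid relation `(r×id)(id×r)(r×id) = (id×r)(r×id)(id×r)`. -/
def IsBraid (r : X × X → X × X) : Prop :=
  r12 r ∘ r23 r ∘ r12 r = r23 r ∘ r12 r ∘ r23 r

/-- Non-degeneracy: writing `r (x, y) = (σ x y, γ y x)`, each `σ x` and each `γ y`
is a permutation of `X`. -/
def IsNonDeg (r : X × X → X × X) : Prop :=
  (∀ x : X, Function.Bijective fun y => (r (x, y)).1) ∧
  (∀ y : X, Function.Bijective fun x => (r (x, y)).2)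

/-- The relations `x y = u v` whenever `r (x, y) = (u, v)` of the structure group. -/
def structRels (r : X × X → X × X) : Set (FreeGroup X) :=
  {w | ∃ x y : X, w = FreeGroup.of x * FreeGroup.of y *
    (FreeGroup.of (r (x, y)).1 * FreeGroup.of (r (x, y)).2)⁻¹}

/-- The structure group `G(X,r)` of a solution, presented with generating set `X` and
relations `x y = u v` whenever `r (x, y) = (u, v)`. -/
abbrev StructureGroup (r : X × X → X × X) : Type u := PresentedGroup (structRels r)

/-- The canonical map `X → G(X,r)`. -/
def iota (r : X × X → X × X) : X → StructureGroup r := fun x => PresentedGroup.of x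

/-- The setoid identifying `x` and `y` whenever `σ x = σ y`. -/
def retractSetoid (r : X × X → X × X) : Setoid X where
  r x y := (fun z => (r (x, z)).1) = (fun z => (r (y, z)).1)
  iseqv := ⟨fun _ => rfl, Eq.symm, Eq.trans⟩

/-- The underlying set of the retraction. -/
abbrev RetSet (r : X × X → X × X) : Type u := Quotient (retractSetoid r)

/-- The retracted solution on `X/∼` (for non-degenerate involutive solutions this is
well defined, and computing it on the chosen representatives gives the retraction). -/
noncomputable def retractMap (r : X × X → X × X) : RetSet r × RetSet r → RetSet r × RetSet r :=
  fun p => (Quotient.mk (retractSetoid r) (r (p.1.out, p.2.out)).1,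
            Quotient.mk (retractSetoid r) (r (p.1.out, p.2.out)).2)

/-- The iterated retractions `Ret^m (X, r)`, as pairs (set, map). -/
noncomputable def retIter (X : Type u) (r : X × X → X × X) : ℕ → (Y : Type u) × (Y × Y → Y × Y)
  | 0 => ⟨X, r⟩
  | m + 1 => ⟨RetSet (retIter X r m).2, retractMap (retIter X r m).2⟩

/-- `(X, r)` is a multipermutation solution if some iterated retraction `Ret^m (X, r)`,
`m ≥ 1`, has exactly one element. -/
def IsMultipermutation (X : Type u) (r : X × X → X × X) : Prop :=
  ∃ m : ℕ, 1 ≤ m ∧ Nat.card (retIter X r m).1 = 1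

end YBE

/-- A group is left orderable if it admits a total order invariant under left
multiplication. -/
def LeftOrderable (G : Type*) [Group G] : Prop :=
  ∃ lo : LinearOrder G, ∀ x y z : G, lo.lt x y → lo.lt (z * x) (z * y)

/-- A group is poly-ℤ if it has a subnormal series with all quotients infinite cyclic. -/
def IsPolyZ (G : Type*) [Group G] : Prop :=
  ∃ (n : ℕ) (s : Fin (n + 1) → Subgroup G),
    s 0 = ⊥ ∧ s (Fin.last n) = ⊤ ∧
    ∀ i : Fin n, s i.castSucc ≤ s i.succ ∧
      ∃ hn : ((s i.castSucc).subgroupOf (s i.succ)).Normal,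
        haveI := hn
        Nonempty ((↥(s i.succ) ⧸ (s i.castSucc).subgroupOf (s i.succ)) ≃* Multiplicative ℤ)

namespace YBE

variable {G : Type*} [Group G]

/-- The conjugacy class of `g₀` in `G`. -/
abbrev ConjClassOf (G : Type*) [Group G] (g₀ : G) : Type _ := {x : G // IsConj g₀ x}

/-- The solution `r (x, y) = (x y x⁻¹, x)` on a conjugacy class. -/
def conjSol (G : Type*) [Group G] (g₀ : G) :
    ConjClassOf G g₀ × ConjClassOf G g₀ → ConjClassOf G g₀ × ConjClassOf G g₀ :=
  fun p => (⟨p.1.1 * p.2.1 * p.1.1⁻¹, p.2.2.trans (isConj_iff.mpr ⟨p.1.1, rfl⟩)⟩, p.1)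

end YBE


section AuxForProof

/-- In any group, the conjugacy class of `a` is finite iff the centralizer of `a`
has finite index. -/
lemma conjClass_finite_iff_centralizer_finiteIndex {K : Type*} [Group K] (a : K) :
    {b | IsConj a b}.Finite ↔ (Subgroup.centralizer {a} : Subgroup K).FiniteIndex := by
  set H : Subgroup K := Subgroup.centralizer {a} with hH
  have hf : ∀ g h : K, (QuotientGroup.leftRel H) g h → g * a * g⁻¹ = h * a * h⁻¹ := by
    intro g h hgh
    have hm : g⁻¹ * h ∈ H := QuotientGroup.leftRel_apply.mp hgh
    have h2 : a * (g⁻¹ * h) = (g⁻¹ * h) * a :=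
      (Subgroup.mem_centralizer_iff.mp hm) a rfl
    calc g * a * g⁻¹ = g * (a * (g⁻¹ * h)) * h⁻¹ := by group
      _ = g * ((g⁻¹ * h) * a) * h⁻¹ := by rw [h2]
      _ = h * a * h⁻¹ := by group
  let F : K ⧸ H → K := Quotient.lift (fun g => g * a * g⁻¹) hf
  have hFmk : ∀ g : K, F (QuotientGroup.mk g) = g * a * g⁻¹ := fun g => rfl
  have hrange : Set.range F = {b | IsConj a b} := by
    ext b
    constructor
    · rintro ⟨q, hq⟩
      induction q using QuotientGroup.induction_on with
      | H g => exact isConj_iff.mpr ⟨g, by rw [← hq, hFmk]⟩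
    · rintro hb
      obtain ⟨c, hc⟩ := isConj_iff.mp hb
      exact ⟨QuotientGroup.mk c, hc⟩
  have hinj : Function.Injective F := by
    intro q1 q2 hq
    induction q1 using QuotientGroup.induction_on with
    | H g =>
      induction q2 using QuotientGroup.induction_on with
      | H h =>
        rw [hFmk, hFmk] at hq
        refine Quotient.sound (QuotientGroup.leftRel_apply.mpr ?_)
        refine Subgroup.mem_centralizer_iff.mpr ?_
        rintro m rfl
        calc m * (g⁻¹ * h) = g⁻¹ * (g * m * g⁻¹) * h := by group
          _ = g⁻¹ * (h * m * h⁻¹) * h := by rw [hq]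
          _ = (g⁻¹ * h) * m := by group
  constructor
  · intro hfin
    haveI := hfin.to_subtype
    haveI : Finite (K ⧸ H) := by
      refine Finite.of_injective (fun q => (⟨F q, by rw [← hrange]; exact ⟨q, rfl⟩⟩ :
        {b | IsConj a b})) ?_
      intro q1 q2 h
      exact hinj (congrArg Subtype.val h)
    exact Subgroup.finiteIndex_of_finite_quotient
  · intro hFI
    haveI := hFI
    rw [← hrange]
    exact Set.finite_range F

namespace YBE

-- the defining relation, seen in the structure group
lemma iota_rel' {X : Type u} (r : X × X → X × X) (x y : X) :
    iota r x * iota r y = iota r (r (x, y)).1 * iota r (r (x, y)).2 := by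
  have hmem : (FreeGroup.of x * FreeGroup.of y *
      (FreeGroup.of (r (x, y)).1 * FreeGroup.of (r (x, y)).2)⁻¹)
        ∈ Subgroup.normalClosure (structRels r) :=
    Subgroup.subset_normalClosure ⟨x, y, rfl⟩
  have h1 : (QuotientGroup.mk (FreeGroup.of x * FreeGroup.of y *
      (FreeGroup.of (r (x, y)).1 * FreeGroup.of (r (x, y)).2)⁻¹) :
        PresentedGroup (structRels r)) = 1 :=
    (QuotientGroup.eq_one_iff _).mpr hmem
  rw [QuotientGroup.mk_mul, QuotientGroup.mk_inv, QuotientGroup.mk_mul,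
    QuotientGroup.mk_mul, mul_inv_eq_one] at h1
  exact h1

variable {G : Type*} [Group G]

lemma conj_rel (g₀ : G) (x y : ConjClassOf G g₀) :
    iota (conjSol G g₀) x * iota (conjSol G g₀) y * (iota (conjSol G g₀) x)⁻¹ =
      iota (conjSol G g₀) ⟨x.1 * y.1 * x.1⁻¹, y.2.trans (isConj_iff.mpr ⟨x.1, rfl⟩)⟩ := by
  have := iota_rel' (conjSol G g₀) x y
  rw [mul_inv_eq_iff_eq_mul]
  exact this

lemma conj_rel_inv (g₀ : G) (x y : ConjClassOf G g₀) :
    (iota (conjSol G g₀) x)⁻¹ * iota (conjSol G g₀) y * iota (conjSol G g₀) x =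
      iota (conjSol G g₀) ⟨x.1⁻¹ * y.1 * x.1, y.2.trans (isConj_iff.mpr ⟨x.1⁻¹, by group⟩)⟩ := by
  set z : ConjClassOf G g₀ := ⟨x.1⁻¹ * y.1 * x.1, y.2.trans (isConj_iff.mpr ⟨x.1⁻¹, by group⟩)⟩
  have h := conj_rel g₀ x z
  have hz : (⟨x.1 * z.1 * x.1⁻¹, z.2.trans (isConj_iff.mpr ⟨x.1, rfl⟩)⟩ : ConjClassOf G g₀) = y := by
    apply Subtype.ext
    show x.1 * (x.1⁻¹ * y.1 * x.1) * x.1⁻¹ = y.1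
    group
  rw [hz] at h
  rw [← h]
  group

/-- The subgroup of elements of the structure group that conjugate the image of `X`
into itself (in both directions). -/
def conjT (g₀ : G) : Subgroup (StructureGroup (conjSol G g₀)) where
  carrier := {g | ∀ x : ConjClassOf G g₀,
      (∃ x', g * iota (conjSol G g₀) x * g⁻¹ = iota (conjSol G g₀) x') ∧
      (∃ x', g⁻¹ * iota (conjSol G g₀) x * g = iota (conjSol G g₀) x')}
  one_mem' := fun x => ⟨⟨x, by group⟩, ⟨x, by group⟩⟩
  mul_mem' := by
    intro g h hg hh x
    obtain ⟨x1, hx1⟩ := (hh x).1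
    obtain ⟨x2, hx2⟩ := (hg x1).1
    obtain ⟨y1, hy1⟩ := (hg x).2
    obtain ⟨y2, hy2⟩ := (hh y1).2
    constructor
    · refine ⟨x2, ?_⟩
      calc g * h * iota (conjSol G g₀) x * (g * h)⁻¹
          = g * (h * iota (conjSol G g₀) x * h⁻¹) * g⁻¹ := by group
        _ = g * iota (conjSol G g₀) x1 * g⁻¹ := by rw [hx1]
        _ = iota (conjSol G g₀) x2 := hx2
    · refine ⟨y2, ?_⟩
      calc (g * h)⁻¹ * iota (conjSol G g₀) x * (g * h)
          = h⁻¹ * (g⁻¹ * iota (conjSol G g₀) x * g) * h := by group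
        _ = h⁻¹ * iota (conjSol G g₀) y1 * h := by rw [hy1]
        _ = iota (conjSol G g₀) y2 := hy2
  inv_mem' := by
    intro g hg x
    obtain ⟨x1, hx1⟩ := (hg x).2
    obtain ⟨y1, hy1⟩ := (hg x).1
    refine ⟨⟨x1, ?_⟩, ⟨y1, ?_⟩⟩
    · rw [← hx1]; group
    · rw [← hy1]; group

lemma conjT_eq_top (g₀ : G) : conjT g₀ = ⊤ := by
  refine top_unique ?_
  rw [← PresentedGroup.closure_range_of (structRels (conjSol G g₀))]
  refine (Subgroup.closure_le _).mpr ?_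
  rintro _ ⟨y, rfl⟩ x
  exact ⟨⟨_, conj_rel g₀ y x⟩, ⟨_, conj_rel_inv g₀ y x⟩⟩

end YBE

end AuxForProof

open YBE in
/-- For a conjugacy class `X` of a finite group `G` and the solution
`r (x, y) = (x y x⁻¹, x)`, the center of the structure group `G(X, r)` has finite
index; in particular, every conjugacy class of `G(X, r)` is finite. -/
theorem conjSol_center_finiteIndex {G : Type*} [Group G] [Finite G] (g₀ : G) :
    (Subgroup.center (StructureGroup (conjSol G g₀))).FiniteIndex ∧
      ∀ a : StructureGroup (conjSol G g₀), {b | IsConj a b}.Finite := by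
  classical
  set r := conjSol G g₀ with hr
  have hfinX : (Set.range (iota r)).Finite := Set.finite_range _
  have hconj : ∀ (g : StructureGroup r) (x : ConjClassOf G g₀),
      ∃ x', g * iota r x * g⁻¹ = iota r x' := by
    intro g x
    have hg : g ∈ conjT g₀ := by rw [conjT_eq_top]; trivial
    exact (hg x).1
  have hcent : ∀ x : ConjClassOf G g₀, (Subgroup.centralizer {iota r x}).FiniteIndex := by
    intro x
    rw [← conjClass_finite_iff_centralizer_finiteIndex]
    refine hfinX.subset ?_
    rintro b hb
    obtain ⟨c, hc⟩ := isConj_iff.mp hb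
    obtain ⟨x', hx'⟩ := hconj c x
    exact ⟨x', by rw [← hc, hx']⟩
  have hK : (⨅ x : ConjClassOf G g₀, Subgroup.centralizer {iota r x}).FiniteIndex :=
    Subgroup.finiteIndex_iInf hcent
  have hle : (⨅ x : ConjClassOf G g₀, Subgroup.centralizer {iota r x}) ≤
      Subgroup.center (StructureGroup r) := by
    intro g hg
    rw [Subgroup.mem_center_iff]
    intro h
    have hclos : Subgroup.closure (Set.range (PresentedGroup.of :
        ConjClassOf G g₀ → StructureGroup r)) ≤ Subgroup.centralizer {g} := by
      refine (Subgroup.closure_le _).mpr ?_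
      rintro _ ⟨x, rfl⟩
      refine Subgroup.mem_centralizer_iff.mpr ?_
      intro m hm
      rw [Set.mem_singleton_iff] at hm
      have hgx : g ∈ Subgroup.centralizer {iota r x} := Subgroup.mem_iInf.mp hg x
      rw [hm]
      exact ((Subgroup.mem_centralizer_iff.mp hgx) (iota r x) rfl).symm
    have htop : h ∈ Subgroup.closure (Set.range (PresentedGroup.of :
        ConjClassOf G g₀ → StructureGroup r)) := by
      rw [PresentedGroup.closure_range_of]; trivial
    exact ((Subgroup.mem_centralizer_iff.mp (hclos htop)) g rfl).symm
  haveI := hK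
  have hcenterFI : (Subgroup.center (StructureGroup r)).FiniteIndex :=
    Subgroup.finiteIndex_of_le hle
  refine ⟨hcenterFI, ?_⟩
  intro a
  rw [conjClass_finite_iff_centralizer_finiteIndex]
  haveI := hcenterFI
  have hle2 : Subgroup.center (StructureGroup r) ≤ Subgroup.centralizer {a} := by
    intro z hz
    refine Subgroup.mem_centralizer_iff.mpr ?_
    intro m hm
    rw [Set.mem_singleton_iff] at hm
    rw [hm]
    exact Subgroup.mem_center_iff.mp hz a
  exact Subgroup.finiteIndex_of_le hle2
end

section
/- Let X be a conjugacy class of a finite group G and let r: X×X → X×X be given by r(x,y) = (xyx⁻¹, x). Then the derived (commutator) subgroup of the structure group G(X,r) is a finite group. -/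
universe u

section Aux

namespace YBE

variable {G : Type*} [Group G] [Finite G] (g₀ : G)

/-- Conjugation action of `G` on the conjugacy class. -/
def cAct (g : G) (y : ConjClassOf G g₀) : ConjClassOf G g₀ :=
  ⟨g * y.1 * g⁻¹, y.2.trans (isConj_iff.mpr ⟨g, rfl⟩)⟩

lemma relHolds : ∀ w ∈ structRels (conjSol G g₀),
    FreeGroup.lift (fun x : ConjClassOf G g₀ => x.1) w = 1 := by
  rintro w ⟨x, y, rfl⟩
  simp [conjSol, mul_assoc]

/-- The homomorphism `G(X,r) → G` sending each generator to itself. -/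
noncomputable def pi : StructureGroup (conjSol G g₀) →* G :=
  PresentedGroup.toGroup (relHolds g₀)

lemma pi_of (x : ConjClassOf G g₀) : pi g₀ (PresentedGroup.of x) = x.1 :=
  PresentedGroup.toGroup.of _

lemma of_mul_of (x y : ConjClassOf G g₀) :
    (PresentedGroup.of x : StructureGroup (conjSol G g₀)) * PresentedGroup.of y
      = PresentedGroup.of (cAct g₀ x.1 y) * PresentedGroup.of x := by
  have hw : (FreeGroup.of x * FreeGroup.of y *
      (FreeGroup.of ((conjSol G g₀ (x, y)).1) * FreeGroup.of ((conjSol G g₀ (x, y)).2))⁻¹)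
      ∈ Subgroup.normalClosure (structRels (conjSol G g₀)) :=
    Subgroup.subset_normalClosure ⟨x, y, rfl⟩
  have h1 : (QuotientGroup.mk (FreeGroup.of x * FreeGroup.of y *
      (FreeGroup.of ((conjSol G g₀ (x, y)).1) * FreeGroup.of ((conjSol G g₀ (x, y)).2))⁻¹) :
      StructureGroup (conjSol G g₀)) = 1 := (QuotientGroup.eq_one_iff _).mpr hw
  have h2 : (PresentedGroup.of x : StructureGroup (conjSol G g₀)) * PresentedGroup.of y *
      (PresentedGroup.of ((conjSol G g₀ (x, y)).1) *
        PresentedGroup.of ((conjSol G g₀ (x, y)).2))⁻¹ = 1 := h1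
  have h3 := mul_inv_eq_one.mp h2
  exact h3

lemma conj_of (h : StructureGroup (conjSol G g₀)) (y : ConjClassOf G g₀) :
    h * PresentedGroup.of y * h⁻¹ = PresentedGroup.of (cAct g₀ (pi g₀ h) y) := by
  have key : ∀ h : StructureGroup (conjSol G g₀),
      h ∈ Subgroup.closure (Set.range (PresentedGroup.of (rels := structRels (conjSol G g₀)))) →
      ∀ y, h * PresentedGroup.of y * h⁻¹ = PresentedGroup.of (cAct g₀ (pi g₀ h) y) := by
    intro h hh
    refine Subgroup.closure_induction ?_ ?_ ?_ ?_ hh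
    · rintro _ ⟨x, rfl⟩ y
      rw [of_mul_of g₀ x y, pi_of]
      group
    · intro y
      simp only [map_one]
      have : cAct g₀ (1 : G) y = y := by
        apply Subtype.ext; simp [cAct]
      rw [this]; group
    · intro a b _ _ ha hb y
      have : cAct g₀ (pi g₀ (a * b)) y = cAct g₀ (pi g₀ a) (cAct g₀ (pi g₀ b) y) := by
        apply Subtype.ext; simp [cAct, mul_assoc]
      rw [this, ← ha (cAct g₀ (pi g₀ b) y), ← hb y]
      group
    · intro a _ ha y
      have h1 := ha (cAct g₀ (pi g₀ a)⁻¹ y)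
      have h2 : cAct g₀ (pi g₀ a) (cAct g₀ (pi g₀ a)⁻¹ y) = y := by
        apply Subtype.ext; simp [cAct, mul_assoc]
      rw [h2] at h1
      rw [map_inv, ← h1]
      group
  exact key h (by rw [PresentedGroup.closure_range_of]; trivial) y

lemma ker_le_center :
    (pi g₀).ker ≤ Subgroup.center (StructureGroup (conjSol G g₀)) := by
  intro k hk
  rw [Subgroup.mem_center_iff]
  intro g
  have hcomm : ∀ y : ConjClassOf G g₀,
      (PresentedGroup.of y : StructureGroup (conjSol G g₀)) * k = k * PresentedGroup.of y := by
    intro y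
    have := conj_of g₀ k y
    rw [MonoidHom.mem_ker.mp hk] at this
    have h0 : cAct g₀ (1 : G) y = y := by apply Subtype.ext; simp [cAct]
    rw [h0] at this
    have : k * PresentedGroup.of y = PresentedGroup.of y * k := by
      calc k * PresentedGroup.of y = k * PresentedGroup.of y * k⁻¹ * k := by group
        _ = PresentedGroup.of y * k := by rw [this]
    exact this.symm
  have hg : g ∈ Subgroup.centralizer {k} := by
    refine PresentedGroup.generated_by _ (Subgroup.centralizer {k}) ?_ g
    intro j
    rw [Subgroup.mem_centralizer_iff]
    rintro m rfl
    exact (hcomm j).symm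
  exact (Subgroup.mem_centralizer_iff.mp hg k rfl).symm

end YBE

end Aux


open YBE in
/-- For a conjugacy class `X` of a finite group `G` and the solution
`r (x, y) = (x y x⁻¹, x)`, the derived subgroup of the structure group `G(X, r)`
is a finite group. -/
theorem conjSol_commutator_finite {G : Type*} [Group G] [Finite G] (g₀ : G) :
    Finite ↥(commutator (StructureGroup (conjSol G g₀))) := by
  classical
  set H := StructureGroup (conjSol G g₀) with hH
  set K := (YBE.pi g₀).ker with hK
  have hker : K ≤ Subgroup.center H := YBE.ker_le_center g₀
  haveI : Finite (H ⧸ K) :=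
    Finite.of_equiv _ (QuotientGroup.quotientKerEquivRange (YBE.pi g₀)).symm.toEquiv
  letI : Bracket H H := commutatorElement
  have key1 : ∀ (g h z : H), z ∈ Subgroup.center H → ⁅g * z, h⁆ = ⁅g, h⁆ := by
    intro g h z hz
    have hc : z * h = h * z := (Subgroup.mem_center_iff.mp hz h).symm
    calc ⁅g * z, h⁆ = g * (z * h * z⁻¹) * g⁻¹ * h⁻¹ := by
          rw [commutatorElement_def]; group
      _ = ⁅g, h⁆ := by rw [hc, commutatorElement_def]; group
  have key2 : ∀ (g h w : H), w ∈ Subgroup.center H → ⁅g, h * w⁆ = ⁅g, h⁆ := by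
    intro g h w hw
    have hc : w * g⁻¹ = g⁻¹ * w := (Subgroup.mem_center_iff.mp hw g⁻¹).symm
    calc ⁅g, h * w⁆ = g * h * (w * g⁻¹ * w⁻¹) * h⁻¹ := by
          rw [commutatorElement_def]; group
      _ = ⁅g, h⁆ := by rw [hc, commutatorElement_def]; group
  haveI hfin : Finite (commutatorSet H) := by
    have hsub : commutatorSet H ⊆
        Set.range (fun p : (H ⧸ K) × (H ⧸ K) => ⁅Quotient.out p.1, Quotient.out p.2⁆) := by
      rintro _ ⟨a, b, rfl⟩
      refine ⟨(QuotientGroup.mk a, QuotientGroup.mk b), ?_⟩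
      set a' : H := Quotient.out (QuotientGroup.mk a : H ⧸ K)
      set b' : H := Quotient.out (QuotientGroup.mk b : H ⧸ K)
      have ha' : (QuotientGroup.mk a' : H ⧸ K) = QuotientGroup.mk a := Quotient.out_eq' _
      have hb' : (QuotientGroup.mk b' : H ⧸ K) = QuotientGroup.mk b := Quotient.out_eq' _
      have hza : a'⁻¹ * a ∈ K := QuotientGroup.eq.mp ha'
      have hzb : b'⁻¹ * b ∈ K := QuotientGroup.eq.mp hb'
      have hea : a = a' * (a'⁻¹ * a) := by group
      have heb : b = b' * (b'⁻¹ * b) := by group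
      show ⁅a', b'⁆ = ⁅a, b⁆
      conv_rhs => rw [hea, heb]
      rw [key1 _ _ _ (hker hza), key2 _ _ _ (hker hzb)]
    exact Set.Finite.subset (Set.finite_range _) hsub
  exact inferInstance
end

section
/- Let A be a left brace, with λ_a(b) = ab − a. Then the map r_A: A×A → A×A defined by r_A(a,b) = (λ_a(b), λ⁻¹_{λ_a(b)}(a)) is a non-degenerate involutive set-theoretic solution of the Yang–Baxter equation; that is, r_A is a bijection satisfying (r_A×id)(id×r_A)(r_A×id) = (id×r_A)(r_A×id)(id×r_A), r_A² = id, and in the notation r_A(a,b) = (σ_a(b), γ_b(a)) every σ_a and every γ_b is a permutation of A. -/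
/-- A left brace: an abelian group `(A, +)` together with a group operation `(a, b) ↦ a * b`
on the same set such that `a * (b + c) + a = a * b + a * c` for all `a`, `b`, `c`. -/
class LeftBrace (A : Type*) extends AddCommGroup A, Group A where
  mul_add_add : ∀ a b c : A, a * (b + c) + a = a * b + a * c

/-- The lambda map of a left brace: `λ a b = a * b - a`. -/
def LeftBrace.lam {A : Type*} [LeftBrace A] (a b : A) : A := a * b - a

namespace LeftBrace

variable {A : Type*} [LeftBrace A]

/-- `r` acting on the first two coordinates of `A × A × A`. -/
def r12 (r : A × A → A × A) : A × A × A → A × A × A :=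
  fun p => ((r (p.1, p.2.1)).1, (r (p.1, p.2.1)).2, p.2.2)

/-- `r` acting on the last two coordinates of `A × A × A`. -/
def r23 (r : A × A → A × A) : A × A × A → A × A × A :=
  fun p => (p.1, r p.2)

/-- The braid relation `(r×id)(id×r)(r×id) = (id×r)(r×id)(id×r)`. -/
def IsBraid (r : A × A → A × A) : Prop :=
  r12 r ∘ r23 r ∘ r12 r = r23 r ∘ r12 r ∘ r23 r

/-- Non-degeneracy: writing `r (a, b) = (σ a b, γ b a)`, each `σ a` and each `γ b`
is a permutation. -/
def IsNonDeg (r : A × A → A × A) : Prop :=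
  (∀ a : A, Function.Bijective fun b => (r (a, b)).1) ∧
  (∀ b : A, Function.Bijective fun a => (r (a, b)).2)

/-- The solution associated to a left brace:
`r (a, b) = (λ_a b, λ⁻¹_{λ_a b} a)`. -/
noncomputable def braceSol (A : Type*) [LeftBrace A] : A × A → A × A :=
  fun p => (lam p.1 p.2, Function.invFun (lam (lam p.1 p.2)) p.1)

end LeftBrace

namespace LeftBrace

variable {A : Type*} [LeftBrace A]

lemma mul_add' (a b c : A) : a * (b + c) = a * b + a * c - a :=
  eq_sub_of_add_eq (mul_add_add a b c)

lemma mul_zero' (a : A) : a * (0 : A) = a := by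
  have h := mul_add_add a 0 0
  rw [add_zero] at h
  exact (add_left_cancel h).symm

lemma one_eq_zero : (1 : A) = 0 := by
  have h := mul_zero' (1 : A)
  rw [one_mul] at h
  exact h.symm

lemma lam_add (a b c : A) : lam a (b + c) = lam a b + lam a c := by
  simp only [lam, mul_add']; abel

lemma lam_sub (a b c : A) : lam a (b - c) = lam a b - lam a c := by
  have h := lam_add a (b - c) c
  rw [sub_add_cancel] at h
  exact eq_sub_of_add_eq h.symm

lemma lam_mul (a b c : A) : lam (a * b) c = lam a (lam b c) := by
  have : lam a (lam b c) = lam a (b * c) - lam a b := by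
    rw [show lam b c = b * c - b from rfl, lam_sub]
  rw [this]
  simp only [lam, mul_assoc]
  abel

lemma lam_one (b : A) : lam (1 : A) b = b := by
  simp [lam, one_eq_zero]

lemma lam_inv_lam (a b : A) : lam a⁻¹ (lam a b) = b := by
  rw [← lam_mul, inv_mul_cancel, lam_one]

lemma lam_lam_inv (a b : A) : lam a (lam a⁻¹ b) = b := by
  rw [← lam_mul, mul_inv_cancel, lam_one]

lemma lam_bijective (a : A) : Function.Bijective (lam a) :=
  Function.bijective_iff_has_inverse.2 ⟨lam a⁻¹, lam_inv_lam a, lam_lam_inv a⟩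

lemma invFun_lam (a b : A) : Function.invFun (lam a) b = lam a⁻¹ b := by
  apply (lam_bijective a).injective
  rw [Function.invFun_eq ((lam_bijective a).surjective b), lam_lam_inv]

lemma mul_eq (a b : A) : a * b = lam a b + a := by simp [lam]

lemma lam_self_inv (a : A) : lam a⁻¹ a = -a⁻¹ := by
  simp [lam, inv_mul_cancel, one_eq_zero]

lemma lam_inv_mul (a b : A) : lam a (a⁻¹ * b) = b - a := by
  rw [lam, mul_inv_cancel_left]


lemma braceSol_apply' (a b : A) :
    braceSol A (a, b) = (lam a b, lam (lam a b)⁻¹ a) := by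
  simp [braceSol, invFun_lam]

lemma snd_eq (a b : A) : lam (lam a b)⁻¹ a = (lam a b)⁻¹ * (a * b) := by
  symm
  calc (lam a b)⁻¹ * (a * b) = (lam a b)⁻¹ * (lam a b + a) := by rw [← mul_eq]
    _ = lam (lam a b)⁻¹ (lam a b + a) + (lam a b)⁻¹ := mul_eq _ _
    _ = lam (lam a b)⁻¹ (lam a b) + lam (lam a b)⁻¹ a + (lam a b)⁻¹ := by rw [lam_add]
    _ = lam (lam a b)⁻¹ a := by rw [lam_self_inv]; abel

lemma braceSol_apply (a b : A) :
    braceSol A (a, b) = (lam a b, (lam a b)⁻¹ * (a * b)) := by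
  rw [braceSol_apply', snd_eq]

lemma braceSol_involutive : Function.Involutive (braceSol A) := by
  intro p
  obtain ⟨a, b⟩ := p
  simp [braceSol_apply', lam_lam_inv, lam_inv_lam]

lemma gamma_eq (a b : A) : (lam a b)⁻¹ * (a * b) = ((a * b)⁻¹ - b⁻¹)⁻¹ := by
  have h : ((lam a b)⁻¹ * (a * b))⁻¹ = (a * b)⁻¹ - b⁻¹ := by
    rw [mul_inv_rev, inv_inv]
    calc (a * b)⁻¹ * lam a b = lam (a * b)⁻¹ (lam a b) + (a * b)⁻¹ := mul_eq _ _
      _ = lam (a * b)⁻¹ (a * b) - lam (a * b)⁻¹ a + (a * b)⁻¹ := by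
          rw [show lam a b = a * b - a from rfl, lam_sub]
      _ = -(a * b)⁻¹ - ((a * b)⁻¹ * a - (a * b)⁻¹) + (a * b)⁻¹ := by
          rw [lam_self_inv, lam]
      _ = (a * b)⁻¹ - (a * b)⁻¹ * a := by abel
      _ = (a * b)⁻¹ - b⁻¹ := by rw [mul_inv_rev, inv_mul_cancel_right]
  rw [← h, inv_inv]

lemma key1 (a b c : A) :
    lam (lam a b) (lam ((lam a b)⁻¹ * (a * b)) c) = lam a (lam b c) := by
  rw [← lam_mul, mul_inv_cancel_left, lam_mul]

lemma key2 (a b c : A) :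
    (lam a (lam b c))⁻¹ * (lam a b * lam ((lam a b)⁻¹ * (a * b)) c) =
      lam ((lam a (lam b c))⁻¹ * (a * lam b c)) ((lam b c)⁻¹ * (b * c)) := by
  set q := lam a (lam b c) with hq
  have hq2 : lam (a * b) c = q := lam_mul a b c
  have hab : a * b = a * (b * c) - q := by
    rw [← hq2, lam, ← mul_assoc]; abel
  have hlhs : (q : A)⁻¹ * (lam a b * lam ((lam a b)⁻¹ * (a * b)) c) =
      lam q⁻¹ (a * (b * c)) - lam q⁻¹ q - lam q⁻¹ a := by
    calc q⁻¹ * (lam a b * lam ((lam a b)⁻¹ * (a * b)) c)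
        = q⁻¹ * (lam (lam a b) (lam ((lam a b)⁻¹ * (a * b)) c) + lam a b) := by
          rw [← mul_eq]
      _ = q⁻¹ * (q + lam a b) := by rw [← lam_mul, mul_inv_cancel_left, hq2]
      _ = lam q⁻¹ (q + lam a b) + q⁻¹ := mul_eq _ _
      _ = lam q⁻¹ q + lam q⁻¹ (lam a b) + q⁻¹ := by rw [lam_add]
      _ = lam q⁻¹ (lam a b) := by rw [lam_self_inv]; abel
      _ = lam q⁻¹ (a * b) - lam q⁻¹ a := by
          rw [show lam a b = a * b - a from rfl, lam_sub]
      _ = lam q⁻¹ (a * (b * c)) - lam q⁻¹ q - lam q⁻¹ a := by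
          rw [hab, lam_sub]
  have hrhs : lam (q⁻¹ * (a * lam b c)) ((lam b c)⁻¹ * (b * c)) =
      lam q⁻¹ (a * (b * c)) - lam q⁻¹ q - lam q⁻¹ a := by
    calc lam (q⁻¹ * (a * lam b c)) ((lam b c)⁻¹ * (b * c))
        = lam q⁻¹ (lam a (lam (lam b c) ((lam b c)⁻¹ * (b * c)))) := by
          rw [lam_mul, lam_mul]
      _ = lam q⁻¹ (lam a (b * c - lam b c)) := by rw [lam_inv_mul]
      _ = lam q⁻¹ (lam a (b * c) - q) := by rw [lam_sub, hq]
      _ = lam q⁻¹ ((a * (b * c) - a) - q) := by rw [show lam a (b * c) = a * (b * c) - a from rfl]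
      _ = lam q⁻¹ (a * (b * c)) - lam q⁻¹ a - lam q⁻¹ q := by rw [lam_sub, lam_sub]
      _ = lam q⁻¹ (a * (b * c)) - lam q⁻¹ q - lam q⁻¹ a := by abel
  rw [hlhs, hrhs]

lemma braceSol_braid : IsBraid (braceSol A) := by
  unfold IsBraid
  funext p
  obtain ⟨a, b, c⟩ := p
  simp only [Function.comp_apply, r12, r23, braceSol_apply, Prod.mk.injEq]
  refine ⟨key1 a b c, ?_, ?_⟩
  · rw [key1]
    exact key2 a b c
  · rw [← key2 a b c]
    group

end LeftBrace

open LeftBrace in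
/-- The map `r_A (a, b) = (λ_a b, λ⁻¹_{λ_a b} a)` associated to a left brace `A` is a
non-degenerate involutive set-theoretic solution of the Yang–Baxter equation. -/
theorem LeftBrace.braceSol_isSolution {A : Type*} [LeftBrace A] :
    Function.Bijective (braceSol A) ∧ IsBraid (braceSol A) ∧
      Function.Involutive (braceSol A) ∧ IsNonDeg (braceSol A) := by
  have hinv : Function.Involutive (braceSol A) := braceSol_involutive
  refine ⟨hinv.bijective, braceSol_braid, hinv, ?_, ?_⟩
  · intro a
    have h : (fun b => (braceSol A (a, b)).1) = lam a := by
      funext b; rw [braceSol_apply]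
    rw [h]
    exact lam_bijective a
  · intro b
    have h : (fun a => (braceSol A (a, b)).2) = fun a => ((a * b)⁻¹ - b⁻¹)⁻¹ := by
      funext a; rw [braceSol_apply]; exact gamma_eq a b
    rw [h]
    exact ((Equiv.mulRight b).trans ((Equiv.inv A).trans
      ((Equiv.subRight b⁻¹).trans (Equiv.inv A)))).bijective
end

section
/- Let (X,r) be a non-degenerate involutive set-theoretic solution of the Yang–Baxter equation and let ι: X → G(X,r) be the canonical map sending a generator to its class in the structure group. Then there exists a left brace structure on G(X,r) whose multiplicative group is the group G(X,r), whose additive group is the free abelian group with basis ι(X), and such that r_{G(X,r)} ∘ (ι×ι) = (ι×ι) ∘ r, where r_{G}(a,b) = (λ_a(b), λ⁻¹_{λ_a(b)}(a)) with λ_a(b) = ab − a. -/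
universe u

/-- A left brace structure on a group `G`: an abelian group structure `(G, +)` on the
same set, whose data is given explicitly, satisfying `a * (b + c) + a = a * b + a * c`. -/
structure LeftBraceOn (G : Type*) [Group G] where
  add : G → G → G
  zero : G
  neg : G → G
  add_assoc : ∀ a b c : G, add (add a b) c = add a (add b c)
  add_comm : ∀ a b : G, add a b = add b a
  zero_add : ∀ a : G, add zero a = a
  neg_add : ∀ a : G, add (neg a) a = zero
  mul_add_add : ∀ a b c : G, add (a * add b c) a = add (a * b) (a * c)

namespace LeftBraceOn

variable {G : Type*} [Group G]

/-- The lambda map `λ a b = a * b - a` of a left brace structure. -/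
def lam (B : LeftBraceOn G) (a b : G) : G := B.add (a * b) (B.neg a)

/-- The solution `r (a, b) = (λ_a b, λ⁻¹_{λ_a b} a)` associated to a left brace
structure. -/
noncomputable def rmap (B : LeftBraceOn G) : G × G → G × G :=
  fun p =>
    (B.lam p.1 p.2,
      haveI : Nonempty G := ⟨1⟩
      Function.invFun (B.lam (B.lam p.1 p.2)) p.1)

end LeftBraceOn
namespace YBEProof
open YBE Finsupp

variable {X : Type u} {r : X × X → X × X}

/-- σ_x as an equiv. -/
noncomputable def sig (hnd : IsNonDeg r) (x : X) : X ≃ X :=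
  Equiv.ofBijective _ (hnd.1 x)

/-- γ_y as an equiv. -/
noncomputable def gam (hnd : IsNonDeg r) (y : X) : X ≃ X :=
  Equiv.ofBijective _ (hnd.2 y)

@[simp] lemma sig_apply (hnd : IsNonDeg r) (x y : X) : sig hnd x y = (r (x, y)).1 := rfl
@[simp] lemma gam_apply (hnd : IsNonDeg r) (y x : X) : gam hnd y x = (r (x, y)).2 := rfl

lemma inv_fst (hinv : Function.Involutive r) (x y : X) : (r ((r (x, y)).1, (r (x, y)).2)).1 = x := by
  have h := hinv (x, y)
  rw [show ((r (x, y)).1, (r (x, y)).2) = r (x, y) from rfl, h]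

lemma inv_snd (hinv : Function.Involutive r) (x y : X) : (r ((r (x, y)).1, (r (x, y)).2)).2 = y := by
  have h := hinv (x, y)
  rw [show ((r (x, y)).1, (r (x, y)).2) = r (x, y) from rfl, h]

/-- Braid consequence on σ: `σ_{σ_x y} (σ_{γ_y x} z) = σ_x (σ_y z)`. -/
lemma braid_sig (hbr : IsBraid r) (x y z : X) :
    (r ((r (x, y)).1, (r ((r (x, y)).2, z)).1)).1 = (r (x, (r (y, z)).1)).1 := by
  have h := congrFun hbr (x, y, z)
  simpa [r12, r23, Function.comp] using congrArg (fun p => p.1) h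

/-- `σ_x ∘ σ_y = σ_{σ_x y} ∘ σ_{γ_y x}` as equivs (trans order: right-to-left). -/
lemma sig_comp (hbr : IsBraid r) (hnd : IsNonDeg r) (x y : X) :
    (sig hnd (r (x, y)).2).trans (sig hnd (r (x, y)).1) = (sig hnd y).trans (sig hnd x) := by
  ext z
  simpa using braid_sig hbr x y z

/-- The diagonal map `T x = σ_x⁻¹ x`. -/
noncomputable def Ts (hnd : IsNonDeg r) (x : X) : X := (sig hnd x).symm x

/-- Its inverse `S x = γ_x⁻¹ x`. -/
noncomputable def Sm (hnd : IsNonDeg r) (x : X) : X := (gam hnd x).symm x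

lemma sig_Ts (hnd : IsNonDeg r) (x : X) : (r (x, Ts hnd x)).1 = x := (sig hnd x).apply_symm_apply x

lemma gam_Sm (hnd : IsNonDeg r) (z : X) : (r ((gam hnd z).symm z, z)).2 = z := (gam hnd z).apply_symm_apply z

lemma gam_Ts (hinv : Function.Involutive r) (hnd : IsNonDeg r) (x : X) : (r (x, Ts hnd x)).2 = Ts hnd x := by
  have h := inv_fst hinv x (Ts hnd x)
  rw [sig_Ts hnd x] at h
  -- h : (r (x, (r (x, Ts x)).2)).1 = x, i.e. sig x (r (x,Ts x)).2 = sig x (Ts x)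
  have : sig hnd x ((r (x, Ts hnd x)).2) = sig hnd x (Ts hnd x) := by
    simpa [sig_Ts hnd x] using h
  exact (sig hnd x).injective this

lemma Sm_Ts (hinv : Function.Involutive r) (hnd : IsNonDeg r) (x : X) : Sm hnd (Ts hnd x) = x := by
  have h := gam_Ts hinv hnd x
  -- gam (Ts x) x = Ts x
  have h2 : gam hnd (Ts hnd x) x = Ts hnd x := h
  unfold Sm
  rw [Equiv.symm_apply_eq]
  exact h2.symm

lemma sig_Sm (hinv : Function.Involutive r) (hnd : IsNonDeg r) (z : X) : (r (Sm hnd z, z)).1 = Sm hnd z := by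
  have h := inv_snd hinv (Sm hnd z) z
  rw [show (r (Sm hnd z, z)).2 = z from gam_Sm hnd z] at h
  -- h : (r ((r (Sm z, z)).1, z)).2 = z = gam z ((r (Sm z,z)).1)
  have : gam hnd z ((r (Sm hnd z, z)).1) = gam hnd z (Sm hnd z) :=
    h.trans (gam_Sm hnd z).symm
  exact (gam hnd z).injective this

lemma Ts_Sm (hinv : Function.Involutive r) (hnd : IsNonDeg r) (z : X) : Ts hnd (Sm hnd z) = z := by
  have h := sig_Sm hinv hnd z
  have h2 : sig hnd (Sm hnd z) z = Sm hnd z := h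
  unfold Ts
  rw [Equiv.symm_apply_eq]
  exact h2.symm

/-- `Ts (γ_q p) = σ_q⁻¹ (Ts p)`. -/
lemma Ts_gam (hbr : IsBraid r) (hinv : Function.Involutive r) (hnd : IsNonDeg r) (p q : X) :
    Ts hnd ((r (p, q)).2) = (sig hnd q).symm (Ts hnd p) := by
  set p' := (r (p, q)).1
  set q' := (r (p, q)).2
  have hcomp := sig_comp hbr hnd p q
  have hp : sig hnd p' q' = p := inv_fst hinv p q
  -- goal : (sig q').symm q' = (sig q).symm ((sig p).symm p)
  set t := (sig hnd q).symm ((sig hnd p).symm p) with ht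
  have h1 : sig hnd p' (sig hnd q' t) = sig hnd p (sig hnd q t) := by
    have := congrArg (fun e => e.toFun t) hcomp
    simpa using this
  have h2 : sig hnd p (sig hnd q t) = p := by
    rw [ht, Equiv.apply_symm_apply, Equiv.apply_symm_apply]
  have h3 : sig hnd p' (sig hnd q' t) = sig hnd p' q' := by rw [h1, h2, hp]
  have h4 : sig hnd q' t = q' := (sig hnd p').injective h3
  show Ts hnd q' = t
  unfold Ts
  rw [Equiv.symm_apply_eq]
  exact h4.symm

end YBEProof
namespace YBEProof
open YBE Finsupp

variable {X : Type u} {r : X × X → X × X}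

/-- The linearization of σ_x on `X →₀ ℤ`. -/
noncomputable def sbar (hnd : IsNonDeg r) (x : X) : (X →₀ ℤ) ≃+ (X →₀ ℤ) :=
  Finsupp.domCongr (sig hnd x)

lemma sbar_apply (hnd : IsNonDeg r) (x : X) (v : X →₀ ℤ) (a : X) :
    sbar hnd x v a = v ((sig hnd x).symm a) := rfl

lemma sbar_single (hnd : IsNonDeg r) (x y : X) (n : ℤ) :
    sbar hnd x (single y n) = single ((r (x, y)).1) n :=
  equivMapDomain_single _ _ _

lemma sbar_symm_apply (hnd : IsNonDeg r) (x : X) (v : X →₀ ℤ) (a : X) :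
    (sbar hnd x).symm v a = v (sig hnd x a) := rfl

/-- The affine map `T_x : v ↦ e_x + σ̄_x v`. -/
noncomputable def Tm (hnd : IsNonDeg r) (x : X) (v : X →₀ ℤ) : X →₀ ℤ :=
  single x 1 + sbar hnd x v

/-- The inverse of `T_x`. -/
noncomputable def Tinv (hnd : IsNonDeg r) (x : X) (v : X →₀ ℤ) : X →₀ ℤ :=
  (sbar hnd x).symm (v - single x 1)

lemma Tinv_Tm (hnd : IsNonDeg r) (x : X) (v : X →₀ ℤ) : Tinv hnd x (Tm hnd x v) = v := by
  unfold Tm Tinv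
  rw [add_sub_cancel_left, AddEquiv.symm_apply_apply]

lemma Tm_Tinv (hnd : IsNonDeg r) (x : X) (v : X →₀ ℤ) : Tm hnd x (Tinv hnd x v) = v := by
  unfold Tm Tinv
  rw [AddEquiv.apply_symm_apply, add_sub_cancel]

lemma Tm_inj (hnd : IsNonDeg r) (x : X) {v w : X →₀ ℤ} (h : Tm hnd x v = Tm hnd x w) :
    v = w := by
  rw [← Tinv_Tm hnd x v, h, Tinv_Tm]

lemma Tm_eq (hnd : IsNonDeg r) (x : X) (v : X →₀ ℤ) :
    Tm hnd x v = sbar hnd x (v + single (Ts hnd x) 1) := by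
  unfold Tm
  rw [map_add, sbar_single, sig_Ts hnd x, add_comm]

/-- The ℓ¹ norm of an integer vector. -/
def nrm (v : X →₀ ℤ) : ℕ := ∑ a ∈ v.support, (v a).natAbs

lemma nrm_eq_sum {v : X →₀ ℤ} {s : Finset X} (h : v.support ⊆ s) :
    nrm v = ∑ a ∈ s, (v a).natAbs := by
  refine Finset.sum_subset h fun a _ ha => ?_
  simp [notMem_support_iff.mp ha]

lemma nrm_add_single (v : X →₀ ℤ) (x : X) (c : ℤ) :
    nrm (v + single x c) + (v x).natAbs = nrm v + (v x + c).natAbs := by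
  classical
  set s := insert x (v.support ∪ (v + single x c).support) with hs
  have hx : x ∈ s := Finset.mem_insert_self _ _
  have h1 : nrm v = ∑ a ∈ s, (v a).natAbs :=
    nrm_eq_sum (by intro a ha; exact Finset.mem_insert_of_mem (Finset.mem_union_left _ ha))
  have h2 : nrm (v + single x c) = ∑ a ∈ s, ((v + single x c) a).natAbs :=
    nrm_eq_sum (by intro a ha; exact Finset.mem_insert_of_mem (Finset.mem_union_right _ ha))
  rw [h1, h2, ← Finset.add_sum_erase s _ hx, ← Finset.add_sum_erase s (fun a => (v a).natAbs) hx]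
  have h3 : ∀ a ∈ s.erase x, ((v + single x c) a).natAbs = (v a).natAbs := by
    intro a ha
    have : a ≠ x := Finset.ne_of_mem_erase ha
    rw [Finsupp.add_apply, Finsupp.single_eq_of_ne' (Ne.symm this), add_zero]
  rw [Finset.sum_congr rfl h3]
  have h4 : (v + single x c) x = v x + c := by simp
  rw [h4]
  omega

lemma nrm_zero : nrm (0 : X →₀ ℤ) = 0 := by simp [nrm]

lemma nrm_eq_zero {v : X →₀ ℤ} (h : nrm v = 0) : v = 0 := by
  classical
  ext a
  by_contra ha
  have hmem : a ∈ v.support := mem_support_iff.2 (by simpa using ha)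
  have := Finset.sum_eq_zero_iff.1 h a hmem
  simp only [Int.natAbs_eq_zero] at this
  exact ha (by simpa using this)

lemma nrm_pos {v : X →₀ ℤ} (h : v ≠ 0) : 0 < nrm v :=
  Nat.pos_of_ne_zero fun h0 => h (nrm_eq_zero h0)

lemma nrm_equivMapDomain (e : X ≃ X) (v : X →₀ ℤ) :
    nrm (equivMapDomain e v) = nrm v := by
  have : nrm (equivMapDomain e v) = (equivMapDomain e v).sum fun _ n => n.natAbs := rfl
  rw [this, equivMapDomain_eq_mapDomain, Finsupp.sum_mapDomain_index_inj e.injective]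
  rfl

lemma nrm_sbar (hnd : IsNonDeg r) (x : X) (v : X →₀ ℤ) :
    nrm (sbar hnd x v) = nrm v := nrm_equivMapDomain _ _

lemma nrm_sbar_symm (hnd : IsNonDeg r) (x : X) (v : X →₀ ℤ) :
    nrm ((sbar hnd x).symm v) = nrm v := by
  have : ((sbar hnd x).symm : (X →₀ ℤ) ≃+ (X →₀ ℤ)) = Finsupp.domCongr (sig hnd x).symm :=
    Finsupp.domCongr_symm _
  rw [show (sbar hnd x).symm v = equivMapDomain (sig hnd x).symm v from congrFun (congrArg _ this) v]
  exact nrm_equivMapDomain _ _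

lemma nrm_Tm (hnd : IsNonDeg r) (x : X) (v : X →₀ ℤ) :
    nrm (Tm hnd x v) = nrm (v + single (Ts hnd x) 1) := by
  rw [Tm_eq, nrm_sbar]

lemma nrm_Tinv (hnd : IsNonDeg r) (x : X) (v : X →₀ ℤ) :
    nrm (Tinv hnd x v) = nrm (v + single x (-1)) := by
  unfold Tinv
  rw [nrm_sbar_symm, sub_eq_add_neg, ← single_neg]

lemma nrm_Tm_of_nonneg (hnd : IsNonDeg r) {x : X} {v : X →₀ ℤ} (h : 0 ≤ v (Ts hnd x)) :
    nrm (Tm hnd x v) = nrm v + 1 := by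
  rw [nrm_Tm]
  have := nrm_add_single v (Ts hnd x) 1
  omega

lemma nrm_Tm_of_neg (hnd : IsNonDeg r) {x : X} {v : X →₀ ℤ} (h : v (Ts hnd x) ≤ -1) :
    nrm (Tm hnd x v) + 1 = nrm v := by
  rw [nrm_Tm]
  have := nrm_add_single v (Ts hnd x) 1
  omega

lemma nrm_Tinv_of_pos (hnd : IsNonDeg r) {x : X} {v : X →₀ ℤ} (h : 1 ≤ v x) :
    nrm (Tinv hnd x v) + 1 = nrm v := by
  rw [nrm_Tinv]
  have := nrm_add_single v x (-1)
  omega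

end YBEProof
namespace YBEProof
open YBE Finsupp

variable {X : Type u} {r : X × X → X × X}

/-- The Yang–Baxter relation for the affine maps `T`. -/
lemma Trel (hbr : IsBraid r) (hinv : Function.Involutive r) (hnd : IsNonDeg r)
    (x y : X) (w : X →₀ ℤ) :
    Tm hnd x (Tm hnd y w) = Tm hnd (r (x, y)).1 (Tm hnd (r (x, y)).2 w) := by
  have hσ : ∀ w : X →₀ ℤ, sbar hnd x (sbar hnd y w)
      = sbar hnd (r (x, y)).1 (sbar hnd (r (x, y)).2 w) := by
    intro w
    have h1 : sbar hnd x (sbar hnd y w)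
        = Finsupp.domCongr ((sig hnd y).trans (sig hnd x)) w := by
      rw [← Finsupp.domCongr_trans]; rfl
    have h2 : sbar hnd (r (x, y)).1 (sbar hnd (r (x, y)).2 w)
        = Finsupp.domCongr ((sig hnd (r (x, y)).2).trans (sig hnd (r (x, y)).1)) w := by
      rw [← Finsupp.domCongr_trans]; rfl
    rw [h1, h2, sig_comp hbr hnd x y]
  unfold Tm
  rw [map_add, map_add, sbar_single, sbar_single, inv_fst hinv x y, hσ]
  abel

instance addAutMulGroup (A : Type*) [Add A] : Group (AddAut A) where
  mul g h := AddEquiv.trans h g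
  one := AddEquiv.refl _
  inv := AddEquiv.symm
  mul_assoc _ _ _ := rfl
  one_mul _ := rfl
  mul_one _ := rfl
  inv_mul_cancel := AddEquiv.self_trans_symm

/-- The group of affine transformations of `X →₀ ℤ`. -/
noncomputable def mulφ (X : Type u) :
    AddAut (X →₀ ℤ) →* MulAut (Multiplicative (X →₀ ℤ)) where
  toFun e := AddEquiv.toMultiplicative e
  map_one' := by ext x; rfl
  map_mul' e f := by ext x; rfl

/-- The affine group. -/
noncomputable abbrev Grp (X : Type u) :=
  Multiplicative (X →₀ ℤ) ⋊[mulφ X] AddAut (X →₀ ℤ)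

/-- The image of a generator in the affine group. -/
noncomputable def fgen (hnd : IsNonDeg r) (x : X) : Grp X :=
  ⟨Multiplicative.ofAdd (single x 1), sbar hnd x⟩

lemma fgen_rel (hbr : IsBraid r) (hinv : Function.Involutive r) (hnd : IsNonDeg r) (x y : X) :
    fgen hnd x * fgen hnd y = fgen hnd (r (x, y)).1 * fgen hnd (r (x, y)).2 := by
  have hσ : (sbar hnd x : AddAut (X →₀ ℤ)) * sbar hnd y
      = (sbar hnd (r (x, y)).1 : AddAut (X →₀ ℤ)) * sbar hnd (r (x, y)).2 := by
    apply AddEquiv.ext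
    intro w
    show sbar hnd x (sbar hnd y w) = sbar hnd (r (x, y)).1 (sbar hnd (r (x, y)).2 w)
    have h1 : sbar hnd x (sbar hnd y w)
        = Finsupp.domCongr ((sig hnd y).trans (sig hnd x)) w := by
      rw [← Finsupp.domCongr_trans]; rfl
    have h2 : sbar hnd (r (x, y)).1 (sbar hnd (r (x, y)).2 w)
        = Finsupp.domCongr ((sig hnd (r (x, y)).2).trans (sig hnd (r (x, y)).1)) w := by
      rw [← Finsupp.domCongr_trans]; rfl
    rw [h1, h2, sig_comp hbr hnd x y]
  refine SemidirectProduct.ext ?_ ?_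
  · show Multiplicative.ofAdd (single x 1) * mulφ X (sbar hnd x) (Multiplicative.ofAdd (single y 1))
      = Multiplicative.ofAdd (single (r (x, y)).1 1)
        * mulφ X (sbar hnd (r (x, y)).1) (Multiplicative.ofAdd (single (r (x, y)).2 1))
    show Multiplicative.ofAdd (single x 1 + sbar hnd x (single y 1))
      = Multiplicative.ofAdd (single (r (x, y)).1 1 + sbar hnd (r (x, y)).1 (single (r (x, y)).2 1))
    rw [sbar_single, sbar_single, inv_fst hinv x y, add_comm]
  · exact hσ

/-- The homomorphism from the structure group to the affine group. -/
noncomputable def Phi (hbr : IsBraid r) (hinv : Function.Involutive r) (hnd : IsNonDeg r) :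
    StructureGroup r →* Grp X :=
  PresentedGroup.toGroup (f := fgen hnd) (by
    rintro w ⟨x, y, rfl⟩
    rw [map_mul, map_mul, map_inv, map_mul]
    simp only [FreeGroup.lift_apply_of]
    rw [mul_inv_eq_one]
    exact fgen_rel hbr hinv hnd x y)

variable (hbr : IsBraid r) (hinv : Function.Involutive r) (hnd : IsNonDeg r)

/-- The 1-cocycle `π`. -/
noncomputable def piC (hbr : IsBraid r) (hinv : Function.Involutive r) (hnd : IsNonDeg r)
    (g : StructureGroup r) : X →₀ ℤ :=
  Multiplicative.toAdd (Phi hbr hinv hnd g).left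

/-- The linear part `Λ`. -/
noncomputable def Lam (hbr : IsBraid r) (hinv : Function.Involutive r) (hnd : IsNonDeg r)
    (g : StructureGroup r) : (X →₀ ℤ) ≃+ (X →₀ ℤ) :=
  (Phi hbr hinv hnd g).right

lemma pi_one : piC hbr hinv hnd 1 = 0 := by
  unfold piC
  rw [map_one]
  rfl

lemma pi_mul (g h : StructureGroup r) :
    piC hbr hinv hnd (g * h) = piC hbr hinv hnd g + Lam hbr hinv hnd g (piC hbr hinv hnd h) := by
  unfold piC Lam
  rw [map_mul, SemidirectProduct.mul_left]
  rfl

lemma pi_of (x : X) : piC hbr hinv hnd (iota r x) = single x 1 := by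
  unfold piC Phi
  rw [show iota r x = PresentedGroup.of x from rfl, PresentedGroup.toGroup.of]
  rfl

lemma Lam_of (x : X) : Lam hbr hinv hnd (iota r x) = sbar hnd x := by
  unfold Lam Phi
  rw [show iota r x = PresentedGroup.of x from rfl, PresentedGroup.toGroup.of]
  rfl

lemma pi_mul_of (x : X) (g : StructureGroup r) :
    piC hbr hinv hnd (iota r x * g) = Tm hnd x (piC hbr hinv hnd g) := by
  rw [pi_mul, pi_of, Lam_of]
  rfl

lemma pi_inv_mul_of (x : X) (g : StructureGroup r) :
    piC hbr hinv hnd ((iota r x)⁻¹ * g) = Tinv hnd x (piC hbr hinv hnd g) := by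
  apply Tm_inj hnd x
  rw [Tm_Tinv, ← pi_mul_of hbr hinv hnd x, ← mul_assoc, mul_inv_cancel, one_mul]

/-- The defining relation in the structure group. -/
lemma grel (x y : X) :
    iota r x * iota r y = iota r (r (x, y)).1 * iota r (r (x, y)).2 := by
  rw [← mul_inv_eq_one]
  have h1 : (FreeGroup.of x * FreeGroup.of y
      * (FreeGroup.of (r (x, y)).1 * FreeGroup.of (r (x, y)).2)⁻¹ : FreeGroup X)
      ∈ Subgroup.normalClosure (structRels r) :=
    Subgroup.subset_normalClosure ⟨x, y, rfl⟩
  have h2 := (QuotientGroup.eq_one_iff (G := FreeGroup X)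
      (N := Subgroup.normalClosure (structRels r)) _).2 h1
  exact h2

end YBEProof
namespace YBEProof
open YBE Finsupp
open scoped Classical

variable {X : Type u} {r : X × X → X × X}

lemma exists_neg {v : X →₀ ℤ} (h0 : ¬ v = 0) (hp : ¬ ∃ x, 1 ≤ v x) : ∃ x, v x ≤ -1 := by
  push_neg at hp
  obtain ⟨a, ha⟩ := Finsupp.ne_iff.1 h0
  exact ⟨a, by have := hp a; simp only [coe_zero, Pi.zero_apply] at ha; omega⟩

/-- The inverse `q` of the cocycle, defined by norm recursion. -/
noncomputable def qv (hinv : Function.Involutive r) (hnd : IsNonDeg r) (v : X →₀ ℤ) :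
    StructureGroup r :=
  if h0 : v = 0 then 1
  else if hp : ∃ x, 1 ≤ v x then
    iota r (Classical.choose hp) * qv hinv hnd (Tinv hnd (Classical.choose hp) v)
  else
    (iota r (Sm hnd (Classical.choose (exists_neg h0 hp))))⁻¹ *
      qv hinv hnd (Tm hnd (Sm hnd (Classical.choose (exists_neg h0 hp))) v)
termination_by nrm v
decreasing_by
  · have hx := Classical.choose_spec hp
    have h2 := nrm_Tinv_of_pos hnd hx
    omega
  · have hx := Classical.choose_spec (exists_neg h0 hp)
    have h2 : nrm (Tm hnd (Sm hnd (Classical.choose (exists_neg h0 hp))) v) + 1 = nrm v :=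
      nrm_Tm_of_neg hnd (by rw [Ts_Sm hinv hnd]; exact hx)
    omega

lemma q_zero (hinv : Function.Involutive r) (hnd : IsNonDeg r) : qv hinv hnd (0 : X →₀ ℤ) = 1 := by
  rw [qv]
  simp

lemma q_pos (hinv : Function.Involutive r) (hnd : IsNonDeg r) {v : X →₀ ℤ}
    (hp : ∃ x, 1 ≤ v x) :
    ∃ x, 1 ≤ v x ∧ qv hinv hnd v = iota r x * qv hinv hnd (Tinv hnd x v) := by
  have h0 : ¬ v = 0 := by
    rintro rfl
    obtain ⟨x, hx⟩ := hp
    simp at hx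
  refine ⟨Classical.choose hp, Classical.choose_spec hp, ?_⟩
  rw [qv, dif_neg h0, dif_pos hp]

lemma q_neg (hinv : Function.Involutive r) (hnd : IsNonDeg r) {v : X →₀ ℤ}
    (h0 : ¬ v = 0) (hp : ¬ ∃ x, 1 ≤ v x) :
    ∃ x, v x ≤ -1 ∧ qv hinv hnd v
      = (iota r (Sm hnd x))⁻¹ * qv hinv hnd (Tm hnd (Sm hnd x) v) := by
  refine ⟨Classical.choose (exists_neg h0 hp), Classical.choose_spec (exists_neg h0 hp), ?_⟩
  rw [qv, dif_neg h0, dif_neg hp]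

lemma pi_q (hbr : IsBraid r) (hinv : Function.Involutive r) (hnd : IsNonDeg r) (v : X →₀ ℤ) :
    piC hbr hinv hnd (qv hinv hnd v) = v := by
  suffices H : ∀ n (v : X →₀ ℤ), nrm v ≤ n → piC hbr hinv hnd (qv hinv hnd v) = v from
    H (nrm v) v le_rfl
  intro n
  induction n with
  | zero =>
    intro v hv
    have h0 : v = 0 := nrm_eq_zero (Nat.le_antisymm hv (Nat.zero_le _))
    rw [h0, q_zero, pi_one]
  | succ n ih =>
    intro v hv
    by_cases h0 : v = 0
    · rw [h0, q_zero, pi_one]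
    by_cases hp : ∃ x, 1 ≤ v x
    · obtain ⟨x, hx, heq⟩ := q_pos hinv hnd hp
      have hn : nrm (Tinv hnd x v) ≤ n := by
        have := nrm_Tinv_of_pos hnd hx
        omega
      rw [heq, pi_mul_of, ih _ hn, Tm_Tinv]
    · obtain ⟨x, hx, heq⟩ := q_neg hinv hnd h0 hp
      have hn : nrm (Tm hnd (Sm hnd x) v) ≤ n := by
        have := nrm_Tm_of_neg hnd (x := Sm hnd x) (v := v)
          (by rw [Ts_Sm hinv hnd]; exact hx)
        omega
      rw [heq, pi_inv_mul_of, ih _ hn, Tinv_Tm]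

end YBEProof
namespace YBEProof
open YBE Finsupp

variable {X : Type u} {r : X × X → X × X}

lemma Tm_apply_same (hnd : IsNonDeg r) (x : X) (v : X →₀ ℤ) :
    Tm hnd x v x = 1 + v (Ts hnd x) := by
  unfold Tm
  rw [Finsupp.add_apply, single_eq_same, sbar_apply]
  rfl

lemma Tm_apply_ne (hnd : IsNonDeg r) {x z : X} (h : z ≠ x) (v : X →₀ ℤ) :
    Tm hnd x v z = v ((sig hnd x).symm z) := by
  unfold Tm
  rw [Finsupp.add_apply, single_eq_of_ne' (Ne.symm h), sbar_apply, zero_add]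

lemma Tinv_apply (hnd : IsNonDeg r) (x : X) (v : X →₀ ℤ) (t : X) :
    Tinv hnd x v t = v (sig hnd x t) - (single x (1:ℤ) : X →₀ ℤ) (sig hnd x t) := by
  show ((sbar hnd x).symm (v - single x 1)) t = _
  rw [sbar_symm_apply, Finsupp.sub_apply]

lemma sig_Ts' (hnd : IsNonDeg r) (x : X) : sig hnd x (Ts hnd x) = x := by
  unfold Ts
  exact (sig hnd x).apply_symm_apply x

/-- The key confluence lemma : `q (T_x v) = ι x * q v`. -/
lemma key (hbr : IsBraid r) (hinv : Function.Involutive r) (hnd : IsNonDeg r) :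
    ∀ (n : ℕ) (v : X →₀ ℤ) (x : X), min (nrm v) (nrm (Tm hnd x v)) < n →
      qv hinv hnd (Tm hnd x v) = iota r x * qv hinv hnd v := by
  intro n
  induction n with
  | zero => intro v x h; omega
  | succ n ih =>
    intro v x hlt
    by_cases hw0 : Tm hnd x v = 0
    · -- Case w = 0 : v = -e_{Ts x}
      have hveq : v = Tinv hnd x 0 := by rw [← hw0, Tinv_Tm]
      have hva : ∀ a, v a = -((single x (1:ℤ) : X →₀ ℤ) (sig hnd x a)) := by
        intro a
        rw [hveq, Tinv_apply]
        simp
      have hvTs : v (Ts hnd x) = -1 := by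
        rw [hva, sig_Ts' hnd x, single_eq_same]
      have h0v : ¬ v = 0 := by
        intro h
        rw [h] at hvTs
        simp at hvTs
      have hp : ¬ ∃ b, 1 ≤ v b := by
        rintro ⟨b, hb⟩
        rw [hva b] at hb
        rcases eq_or_ne (sig hnd x b) x with h | h
        · rw [h, single_eq_same] at hb; omega
        · rw [single_eq_of_ne' (Ne.symm h)] at hb; omega
      obtain ⟨x₂, hx₂, heq⟩ := q_neg hinv hnd h0v hp
      have hx₂Ts : x₂ = Ts hnd x := by
        by_contra hne
        have hsig : sig hnd x x₂ ≠ x := by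
          intro h
          refine hne ?_
          have h2 := congrArg (sig hnd x).symm h
          rw [Equiv.symm_apply_apply] at h2
          exact h2
        have hv2 := hx₂
        rw [hva x₂, single_eq_of_ne' (Ne.symm hsig)] at hv2
        omega
      rw [hx₂Ts, Sm_Ts hinv hnd] at heq
      rw [hw0, q_zero, heq, hw0, q_zero, mul_one, mul_inv_cancel]
    -- w ≠ 0
    by_cases hpos : 0 ≤ v (Ts hnd x)
    · -- nrm w = nrm v + 1
      have hnw : nrm (Tm hnd x v) = nrm v + 1 := nrm_Tm_of_nonneg hnd hpos
      have hvn : nrm v ≤ n := by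
        have h1 : min (nrm v) (nrm (Tm hnd x v)) = nrm v := min_eq_left (by omega)
        omega
      have hp : ∃ z, 1 ≤ Tm hnd x v z := ⟨x, by rw [Tm_apply_same]; omega⟩
      obtain ⟨z, hz, heq⟩ := q_pos hinv hnd hp
      by_cases hzx : z = x
      · subst hzx
        rw [heq, Tinv_Tm]
      · set a := (sig hnd x).symm z with ha
        have hva : 1 ≤ v a := by
          rw [← Tm_apply_ne hnd hzx v]
          exact hz
        set v₁ := Tinv hnd a v with hv₁def
        have hv₁ : Tm hnd a v₁ = v := Tm_Tinv hnd a v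
        have hnv₁ : nrm v₁ + 1 = nrm v := nrm_Tinv_of_pos hnd hva
        have ih1 : qv hinv hnd (Tm hnd a v₁) = iota r a * qv hinv hnd v₁ :=
          ih v₁ a (lt_of_le_of_lt (min_le_left _ _) (by omega))
        have hxa1 : (r (x, a)).1 = z := by
          show sig hnd x a = z
          rw [ha, Equiv.apply_symm_apply]
        have hw_eq : Tm hnd x v = Tm hnd z (Tm hnd (r (x, a)).2 v₁) := by
          rw [← hv₁, Trel hbr hinv hnd x a, hxa1]
        have ih2 : qv hinv hnd (Tm hnd (r (x, a)).2 v₁)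
            = iota r (r (x, a)).2 * qv hinv hnd v₁ :=
          ih v₁ _ (lt_of_le_of_lt (min_le_left _ _) (by omega))
        have hu : Tinv hnd z (Tm hnd x v) = Tm hnd (r (x, a)).2 v₁ := by
          rw [hw_eq, Tinv_Tm]
        calc qv hinv hnd (Tm hnd x v)
            = iota r z * qv hinv hnd (Tinv hnd z (Tm hnd x v)) := heq
          _ = iota r z * (iota r (r (x, a)).2 * qv hinv hnd v₁) := by rw [hu, ih2]
          _ = (iota r (r (x, a)).1 * iota r (r (x, a)).2) * qv hinv hnd v₁ := by
              rw [hxa1, mul_assoc]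
          _ = (iota r x * iota r a) * qv hinv hnd v₁ := by rw [← grel x a]
          _ = iota r x * qv hinv hnd (Tm hnd a v₁) := by rw [mul_assoc, ← ih1]
          _ = iota r x * qv hinv hnd v := by rw [hv₁]
    · -- v (Ts x) ≤ -1, nrm w + 1 = nrm v
      push_neg at hpos
      have hvTs : v (Ts hnd x) ≤ -1 := by omega
      have hnw : nrm (Tm hnd x v) + 1 = nrm v := nrm_Tm_of_neg hnd hvTs
      have hwn : nrm (Tm hnd x v) ≤ n := by
        have h1 : min (nrm v) (nrm (Tm hnd x v)) = nrm (Tm hnd x v) := min_eq_right (by omega)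
        omega
      have h0v : ¬ v = 0 := by
        intro h
        rw [h] at hvTs
        simp at hvTs
      by_cases hp : ∃ b, 1 ≤ v b
      · obtain ⟨b, hb, heq⟩ := q_pos hinv hnd hp
        have hbTs : b ≠ Ts hnd x := by
          intro h
          rw [h] at hb
          omega
        set v₁ := Tinv hnd b v with hv₁def
        have hv₁ : Tm hnd b v₁ = v := Tm_Tinv hnd b v
        have hnv₁ : nrm v₁ + 1 = nrm v := nrm_Tinv_of_pos hnd hb
        have hTrel : Tm hnd x v = Tm hnd (r (x, b)).1 (Tm hnd (r (x, b)).2 v₁) := by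
          rw [← hv₁, Trel hbr hinv hnd x b]
        have hTsb' : Ts hnd ((r (x, b)).2) = (sig hnd b).symm (Ts hnd x) :=
          Ts_gam hbr hinv hnd x b
        have hv₁c : v₁ (Ts hnd ((r (x, b)).2)) = v (Ts hnd x) := by
          rw [hTsb', hv₁def, Tinv_apply, Equiv.apply_symm_apply,
            single_eq_of_ne' hbTs, sub_zero]
        have hnTmb' : nrm (Tm hnd (r (x, b)).2 v₁) + 1 = nrm v₁ :=
          nrm_Tm_of_neg hnd (by rw [hv₁c]; omega)
        have ih1 : qv hinv hnd (Tm hnd (r (x, b)).2 v₁)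
            = iota r (r (x, b)).2 * qv hinv hnd v₁ :=
          ih v₁ _ (lt_of_le_of_lt (min_le_right _ _) (by omega))
        have ih2 : qv hinv hnd (Tm hnd (r (x, b)).1 (Tm hnd (r (x, b)).2 v₁))
            = iota r (r (x, b)).1 * qv hinv hnd (Tm hnd (r (x, b)).2 v₁) :=
          ih _ _ (lt_of_le_of_lt (min_le_left _ _) (by omega))
        calc qv hinv hnd (Tm hnd x v)
            = iota r (r (x, b)).1 * (iota r (r (x, b)).2 * qv hinv hnd v₁) := by
              rw [hTrel, ih2, ih1]
          _ = (iota r x * iota r b) * qv hinv hnd v₁ := by rw [← mul_assoc, ← grel x b]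
          _ = iota r x * qv hinv hnd v := by rw [mul_assoc, ← heq]
      · obtain ⟨x₂, hx₂, heq⟩ := q_neg hinv hnd h0v hp
        set y := Sm hnd x₂ with hydef
        have hTy : Ts hnd y = x₂ := Ts_Sm hinv hnd x₂
        by_cases hyx : y = x
        · rw [hyx] at heq
          rw [heq, ← mul_assoc, mul_inv_cancel, one_mul]
        · set c := (gam hnd x).symm y with hcdef
          have hgc : (r (c, x)).2 = y := (gam hnd x).apply_symm_apply y
          have hrel : Tm hnd c (Tm hnd x v) = Tm hnd (r (c, x)).1 (Tm hnd y v) := by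
            have h := Trel hbr hinv hnd c x v
            rw [hgc] at h
            exact h
          have hnv₃ : nrm (Tm hnd y v) + 1 = nrm v :=
            nrm_Tm_of_neg hnd (by rw [hTy]; exact hx₂)
          have hr2 : (r ((r (c, x)).1, y)).2 = x := by
            have h := inv_snd hinv c x
            rw [show ((r (c, x)).1, (r (c, x)).2) = ((r (c, x)).1, y) from by rw [hgc]] at h
            exact h
          have hTsd : Ts hnd ((r (c, x)).1) = sig hnd y (Ts hnd x) := by
            have h := Ts_gam hbr hinv hnd (r (c, x)).1 y
            rw [hr2] at h
            rw [h, Equiv.apply_symm_apply]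
          have hne : sig hnd y (Ts hnd x) ≠ y := by
            intro h
            have h1 : Ts hnd x = Ts hnd y := by
              have h2 := congrArg (sig hnd y).symm h
              rw [Equiv.symm_apply_apply] at h2
              exact h2
            rw [hTy] at h1
            exact hyx (by rw [hydef, ← h1, Sm_Ts hinv hnd])
          have hcoord : (Tm hnd y v) (Ts hnd ((r (c, x)).1)) = v (Ts hnd x) := by
            rw [hTsd, Tm_apply_ne hnd hne, Equiv.symm_apply_apply]
          have hnv₄ : nrm (Tm hnd (r (c, x)).1 (Tm hnd y v)) + 1 = nrm (Tm hnd y v) :=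
            nrm_Tm_of_neg hnd (by rw [hcoord]; omega)
          have ih1 : qv hinv hnd (Tm hnd (r (c, x)).1 (Tm hnd y v))
              = iota r (r (c, x)).1 * qv hinv hnd (Tm hnd y v) :=
            ih _ _ (lt_of_le_of_lt (min_le_right _ _) (by omega))
          have ih2 : qv hinv hnd (Tm hnd c (Tm hnd x v))
              = iota r c * qv hinv hnd (Tm hnd x v) :=
            ih _ _ (lt_of_le_of_lt (min_le_right _ _) (by rw [hrel]; omega))
          have hcomb : iota r c * qv hinv hnd (Tm hnd x v)
              = iota r (r (c, x)).1 * qv hinv hnd (Tm hnd y v) := by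
            rw [← ih2, ← ih1, hrel]
          have hgrel : iota r c * iota r x = iota r (r (c, x)).1 * iota r y := by
            rw [grel c x, hgc]
          rw [heq]
          -- goal : qv (Tm x v) = ι x * ((ι y)⁻¹ * qv (Tm y v))
          have : qv hinv hnd (Tm hnd x v)
              = (iota r c)⁻¹ * (iota r (r (c, x)).1 * qv hinv hnd (Tm hnd y v)) := by
            rw [← hcomb, ← mul_assoc, inv_mul_cancel, one_mul]
          rw [this]
          have hg2 : (iota r c)⁻¹ * iota r (r (c, x)).1 = iota r x * (iota r y)⁻¹ := by
            calc (iota r c)⁻¹ * iota r (r (c, x)).1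
                = (iota r c)⁻¹ * (iota r (r (c, x)).1 * iota r y) * (iota r y)⁻¹ := by group
              _ = (iota r c)⁻¹ * (iota r c * iota r x) * (iota r y)⁻¹ := by rw [← hgrel]
              _ = iota r x * (iota r y)⁻¹ := by group
          rw [← mul_assoc, hg2, mul_assoc]

end YBEProof
namespace YBEProof
open YBE Finsupp

variable {X : Type u} {r : X × X → X × X}

lemma key' (hbr : IsBraid r) (hinv : Function.Involutive r) (hnd : IsNonDeg r)
    (v : X →₀ ℤ) (x : X) :
    qv hinv hnd (Tm hnd x v) = iota r x * qv hinv hnd v :=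
  key hbr hinv hnd (min (nrm v) (nrm (Tm hnd x v)) + 1) v x (Nat.lt_succ_self _)

lemma key_inv (hbr : IsBraid r) (hinv : Function.Involutive r) (hnd : IsNonDeg r)
    (v : X →₀ ℤ) (x : X) :
    qv hinv hnd (Tinv hnd x v) = (iota r x)⁻¹ * qv hinv hnd v := by
  have h := key' hbr hinv hnd (Tinv hnd x v) x
  rw [Tm_Tinv] at h
  rw [h, ← mul_assoc, inv_mul_cancel, one_mul]

lemma q_pi_mul (hbr : IsBraid r) (hinv : Function.Involutive r) (hnd : IsNonDeg r)
    (g : StructureGroup r) :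
    ∀ h : StructureGroup r,
      qv hinv hnd (piC hbr hinv hnd (g * h)) = g * qv hinv hnd (piC hbr hinv hnd h) := by
  have hmem : g ∈ Subgroup.closure (Set.range (iota r)) := by
    rw [show Set.range (iota r)
        = Set.range (PresentedGroup.of : X → PresentedGroup (structRels r)) from rfl,
      PresentedGroup.closure_range_of]
    exact Subgroup.mem_top g
  refine Subgroup.closure_induction
    (p := fun g _ => ∀ h : StructureGroup r,
      qv hinv hnd (piC hbr hinv hnd (g * h)) = g * qv hinv hnd (piC hbr hinv hnd h))
    ?_ ?_ ?_ ?_ hmem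
  · rintro g₁ ⟨x, rfl⟩ h
    rw [pi_mul_of, key' hbr hinv hnd]
  · intro h
    rw [one_mul, one_mul]
  · intro g₁ g₂ _ _ ih₁ ih₂ h
    rw [mul_assoc, ih₁, ih₂, mul_assoc]
  · intro g₁ _ ih₁ h
    have h2 := ih₁ (g₁⁻¹ * h)
    rw [← mul_assoc, mul_inv_cancel, one_mul] at h2
    rw [h2, ← mul_assoc, inv_mul_cancel, one_mul]

lemma q_pi (hbr : IsBraid r) (hinv : Function.Involutive r) (hnd : IsNonDeg r)
    (g : StructureGroup r) : qv hinv hnd (piC hbr hinv hnd g) = g := by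
  have h := q_pi_mul hbr hinv hnd g 1
  rwa [mul_one, pi_one, q_zero, mul_one] at h

end YBEProof
namespace YBEProof
open YBE Finsupp

variable {X : Type u} {r : X × X → X × X}

/-- The brace structure on the structure group. -/
noncomputable def Brace (hbr : IsBraid r) (hinv : Function.Involutive r) (hnd : IsNonDeg r) :
    LeftBraceOn (StructureGroup r) where
  add a b := qv hinv hnd (piC hbr hinv hnd a + piC hbr hinv hnd b)
  zero := qv hinv hnd 0
  neg a := qv hinv hnd (-piC hbr hinv hnd a)
  add_assoc a b c := by
    rw [pi_q, pi_q, add_assoc]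
  add_comm a b := by rw [add_comm]
  zero_add a := by rw [pi_q, zero_add, q_pi]
  neg_add a := by rw [pi_q, neg_add_cancel]
  mul_add_add a b c := by
    rw [pi_mul hbr hinv hnd a, pi_q, pi_mul hbr hinv hnd a b, pi_mul hbr hinv hnd a c,
      map_add]
    congr 1
    abel

lemma Brace_lam (hbr : IsBraid r) (hinv : Function.Involutive r) (hnd : IsNonDeg r)
    (a b : StructureGroup r) :
    (Brace hbr hinv hnd).lam a b
      = qv hinv hnd (Lam hbr hinv hnd a (piC hbr hinv hnd b)) := by
  show qv hinv hnd (piC hbr hinv hnd (a * b)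
      + piC hbr hinv hnd (qv hinv hnd (-piC hbr hinv hnd a))) = _
  rw [pi_q, pi_mul hbr hinv hnd a b]
  congr 1
  abel

lemma q_single (hbr : IsBraid r) (hinv : Function.Involutive r) (hnd : IsNonDeg r) (z : X) :
    qv hinv hnd (single z (1:ℤ)) = iota r z := by
  have h := key' hbr hinv hnd 0 z
  rw [q_zero, mul_one] at h
  rw [← h]
  congr 1
  unfold Tm
  rw [map_zero, add_zero]

lemma Brace_lam_iota (hbr : IsBraid r) (hinv : Function.Involutive r) (hnd : IsNonDeg r)
    (x y : X) :
    (Brace hbr hinv hnd).lam (iota r x) (iota r y) = iota r ((r (x, y)).1) := by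
  rw [Brace_lam, Lam_of, pi_of, sbar_single, q_single hbr hinv hnd]

lemma Brace_lam_inj (hbr : IsBraid r) (hinv : Function.Involutive r) (hnd : IsNonDeg r)
    (a : StructureGroup r) :
    Function.Injective ((Brace hbr hinv hnd).lam a) := by
  intro g₁ g₂ hg
  rw [Brace_lam, Brace_lam] at hg
  have h1 := congrArg (piC hbr hinv hnd) hg
  rw [pi_q, pi_q] at h1
  have h2 := (Lam hbr hinv hnd a).injective h1
  have h3 := congrArg (qv hinv hnd) h2
  rwa [q_pi, q_pi] at h3

end YBEProof

open YBE in
/-- For a non-degenerate involutive set-theoretic solution `(X, r)` of the Yang–Baxter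
equation, there is a left brace structure on the structure group `G(X, r)` whose
multiplicative group is `G(X, r)`, whose additive group is free abelian with basis
`ι(X)` (witnessed by an additive isomorphism with `X →₀ ℤ` sending `ι x` to the basis
element `x`), and whose associated solution is compatible with `r` via `ι`. -/
theorem exists_leftBrace_on_structureGroup {X : Type u}
    (r : X × X → X × X) (hbij : Function.Bijective r) (hbr : IsBraid r)
    (hinv : Function.Involutive r) (hnd : IsNonDeg r) :
    ∃ B : LeftBraceOn (StructureGroup r),
      (∃ φ : StructureGroup r ≃ (X →₀ ℤ),
        (∀ a b : StructureGroup r, φ (B.add a b) = φ a + φ b) ∧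
        ∀ x : X, φ (iota r x) = Finsupp.single x 1) ∧
      ∀ x y : X, B.rmap (iota r x, iota r y) =
        (iota r (r (x, y)).1, iota r (r (x, y)).2) := by
  refine ⟨YBEProof.Brace hbr hinv hnd, ⟨⟨YBEProof.piC hbr hinv hnd, YBEProof.qv hinv hnd,
    YBEProof.q_pi hbr hinv hnd, YBEProof.pi_q hbr hinv hnd⟩, ?_, ?_⟩, ?_⟩
  · intro a b
    show YBEProof.piC hbr hinv hnd (YBEProof.qv hinv hnd _) = _
    rw [YBEProof.pi_q]
    rfl
  · intro x
    exact YBEProof.pi_of hbr hinv hnd x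
  · intro x y
    haveI : Nonempty (StructureGroup r) := ⟨1⟩
    have hfst := YBEProof.Brace_lam_iota hbr hinv hnd x y
    have hsnd : (YBEProof.Brace hbr hinv hnd).lam (iota r ((r (x, y)).1))
        (iota r ((r (x, y)).2)) = iota r x := by
      rw [YBEProof.Brace_lam, YBEProof.Lam_of, YBEProof.pi_of, YBEProof.sbar_single,
        YBEProof.inv_fst hinv, YBEProof.q_single hbr hinv hnd]
    unfold LeftBraceOn.rmap
    rw [Prod.mk.injEq]
    refine ⟨hfst, ?_⟩
    rw [hfst, ← hsnd]
    exact Function.leftInverse_invFun (YBEProof.Brace_lam_inj hbr hinv hnd _) _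
end

section
/- Let (X,r) be a non-degenerate involutive set-theoretic solution of the Yang–Baxter equation. Then the canonical map ι: X → G(X,r), sending each element of X to its class in the structure group, is injective. -/
universe u

open YBE in
/-- For a non-degenerate involutive set-theoretic solution `(X, r)` of the Yang–Baxter
equation, the canonical map `ι : X → G(X, r)` to the structure group is injective. -/
theorem iota_injective {X : Type u}
    (r : X × X → X × X) (hbij : Function.Bijective r) (hbr : IsBraid r)
    (hinv : Function.Involutive r) (hnd : IsNonDeg r) :
    Function.Injective (iota r) := by
  classical
  -- σ_x as a permutation of X
  let S : X → Equiv.Perm X := fun x => Equiv.ofBijective _ (hnd.1 x)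
  have hS : ∀ x y, S x y = (r (x, y)).1 := fun _ _ => rfl
  -- delta functions
  let δ : X → (X → ℤ) := fun x z => if z = x then 1 else 0
  -- the permutation f ↦ δ_x + f ∘ (S x)⁻¹ of X → ℤ
  let T : X → Equiv.Perm (X → ℤ) := fun x =>
    (Equiv.arrowCongr (S x) (Equiv.refl ℤ)).trans (Equiv.addLeft (δ x))
  have hT : ∀ x (f : X → ℤ) (z : X), T x f z = δ x z + f ((S x).symm z) := by
    intro x f z; rfl
  -- the key braid consequence: σ_{σ_x y} ∘ σ_{γ_y x} = σ_x ∘ σ_y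
  have key : ∀ x y z : X,
      (r ((r (x, y)).1, (r ((r (x, y)).2, z)).1)).1 = (r (x, (r (y, z)).1)).1 := by
    intro x y z
    have h := congrFun hbr (x, y, z)
    simp only [Function.comp, r12, r23, Prod.mk.injEq] at h
    exact h.1
  -- involutivity consequence: σ_{σ_x y} (γ_y x) = x
  have hinv1 : ∀ x y : X, (r ((r (x, y)).1, (r (x, y)).2)).1 = x := by
    intro x y
    have h := hinv (x, y)
    calc (r ((r (x, y)).1, (r (x, y)).2)).1 = (r (r (x, y))).1 := rfl
      _ = x := by rw [h]
  -- the main relation: T x * T y = T (σ_x y) * T (γ_y x)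
  have hrel : ∀ x y : X, T x * T y = T (r (x, y)).1 * T (r (x, y)).2 := by
    intro x y
    set u := (r (x, y)).1 with hu
    set v := (r (x, y)).2 with hv
    -- permutation composition equality: S x * S y = S u * S v
    have hcomp : (S x) * (S y) = (S u) * (S v) := by
      ext z
      simp only [Equiv.Perm.mul_apply, hS]
      exact (key x y z).symm
    have hcompsymm : ∀ z, (S y).symm ((S x).symm z) = (S v).symm ((S u).symm z) := by
      intro z
      have := congrArg (·⁻¹) hcomp
      simp only [mul_inv_rev] at this
      have := congrFun (congrArg (fun (e : Equiv.Perm X) => (e : X → X)) this) z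
      simpa using this
    ext f z
    simp only [Equiv.Perm.mul_apply, hT]
    rw [hcompsymm]
    have h1 : δ y ((S x).symm z) = δ u z := by
      simp only [δ]
      by_cases h : z = S x y
      · rw [if_pos, if_pos]
        · rw [hu, ← hS]; exact h
        · rw [h]; simp
      · rw [if_neg, if_neg]
        · rw [hu, ← hS]; exact h
        · intro hc
          exact h (by rw [← hc]; simp)
    have h2 : δ v ((S u).symm z) = δ x z := by
      have hx : S u v = x := hinv1 x y
      simp only [δ]
      by_cases h : z = x
      · rw [if_pos, if_pos]
        · exact h
        · rw [h, ← hx]; simp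
      · rw [if_neg, if_neg]
        · exact h
        · intro hc
          apply h
          have : z = S u v := by rw [← hc]; simp
          rw [this, hx]
    rw [h1, h2]
    ring
  -- map every relation to 1
  have hrels : ∀ w ∈ structRels r, FreeGroup.lift T w = 1 := by
    rintro w ⟨x, y, rfl⟩
    simp only [map_mul, map_inv, FreeGroup.lift_apply_of]
    rw [mul_inv_eq_one]
    exact hrel x y
  -- the induced homomorphism
  let φ : StructureGroup r →* Equiv.Perm (X → ℤ) := PresentedGroup.toGroup hrels
  have hφ : ∀ x : X, φ (iota r x) = T x := fun x => PresentedGroup.toGroup.of hrels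
  intro a b hab
  have hTab : T a = T b := by rw [← hφ a, ← hφ b, hab]
  have := congrFun (congrArg (fun (e : Equiv.Perm (X → ℤ)) => e (0 : X → ℤ)) hTab) a
  simp only [hT, Pi.zero_apply, add_zero, δ, if_pos rfl] at this
  by_contra hne
  rw [if_neg hne] at this
  exact one_ne_zero this
end

section
/- Let (X,r) be a non-degenerate involutive set-theoretic solution of the Yang–Baxter equation, with r(x,y) = (σ_x(y), γ_y(x)), and let 𝒢(X,r) be the permutation group of (X,r), i.e. the subgroup of Sym(X) generated by {σ_x : x ∈ X}. Then the map x ↦ σ_x extends to a surjective group homomorphism π: G(X,r) → 𝒢(X,r), and with respect to the left brace structure on G(X,r) (whose additive group is free abelian on X and which is compatible with r), the kernel of π equals Soc(G(X,r)) = {a ∈ G(X,r) : λ_a = id}. -/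
universe u

open YBE in
/-- For a non-degenerate involutive set-theoretic solution `(X, r)` of the Yang–Baxter
equation, the assignment `x ↦ σ x` extends to a group homomorphism
`π : G(X, r) → Sym(X)` whose range is the permutation group `𝒢(X, r)` (the subgroup
generated by the `σ x`), and, for the left brace structure on `G(X, r)` whose additive
group is free abelian on `X` and which is compatible with `r`, the kernel of `π`
equals the socle `Soc(G(X, r)) = {a : λ a = id}`. -/
theorem permutationGroup_hom_ker_eq_socle {X : Type u}
    (r : X × X → X × X) (hbij : Function.Bijective r) (hbr : IsBraid r)
    (hinv : Function.Involutive r) (hnd : IsNonDeg r)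
    (B : LeftBraceOn (StructureGroup r))
    (hfree : ∃ φ : StructureGroup r ≃ (X →₀ ℤ),
      (∀ a b : StructureGroup r, φ (B.add a b) = φ a + φ b) ∧
      ∀ x : X, φ (iota r x) = Finsupp.single x 1)
    (hcompat : ∀ x y : X, B.rmap (iota r x, iota r y) =
      (iota r (r (x, y)).1, iota r (r (x, y)).2)) :
    ∃ π : StructureGroup r →* Equiv.Perm X,
      (∀ x : X, π (iota r x) = Equiv.ofBijective (fun y => (r (x, y)).1) (hnd.1 x)) ∧
      π.range = Subgroup.closure
        (Set.range fun x : X => Equiv.ofBijective (fun y => (r (x, y)).1) (hnd.1 x)) ∧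
      (π.ker : Set (StructureGroup r)) = {a : StructureGroup r | ∀ c, B.lam a c = c} := by
  
  classical
  obtain ⟨φ, hφadd, hφX⟩ := hfree
  -- basic additive facts
  have h0 : φ B.zero = 0 := by
    have h := hφadd B.zero B.zero
    rw [B.zero_add] at h
    exact left_eq_add.mp h
  have hneg : ∀ a, φ (B.neg a) = -φ a := by
    intro a
    have h := hφadd (B.neg a) a
    rw [B.neg_add, h0] at h
    exact eq_neg_of_add_eq_zero_left h.symm
  have hmulz : ∀ a : StructureGroup r, a * B.zero = a := by
    intro a
    apply φ.injective
    have h := congrArg φ (B.mul_add_add a B.zero B.zero)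
    rw [B.zero_add, hφadd, hφadd] at h
    exact (add_left_cancel h).symm
  have hzero_one : B.zero = (1 : StructureGroup r) := by
    have h := hmulz 1; rwa [one_mul] at h
  have hlam_coord : ∀ a b : StructureGroup r,
      φ (B.lam a b) = φ (a * b) - φ a := by
    intro a b
    unfold LeftBraceOn.lam
    rw [hφadd, hneg, sub_eq_add_neg]
  have hmul_neg : ∀ a b : StructureGroup r,
      φ (a * B.neg b) = φ a + φ a - φ (a * b) := by
    intro a b
    have h := congrArg φ (B.mul_add_add a b (B.neg b))
    have hbn : B.add b (B.neg b) = B.zero := by rw [B.add_comm]; exact B.neg_add b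
    rw [hφadd, hφadd, hbn, hmulz] at h
    exact eq_sub_of_add_eq' h.symm
  have hlam_add : ∀ a b c : StructureGroup r,
      φ (B.lam a (B.add b c)) = φ (B.lam a b) + φ (B.lam a c) := by
    intro a b c
    have h := congrArg φ (B.mul_add_add a b c)
    rw [hφadd, hφadd] at h
    have h2 : φ (a * B.add b c) = φ (a * b) + φ (a * c) - φ a := eq_sub_of_add_eq h
    rw [hlam_coord, hlam_coord, hlam_coord, h2]
    abel
  have hlam_mul : ∀ a b c : StructureGroup r,
      B.lam (a * b) c = B.lam a (B.lam b c) := by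
    intro a b c
    apply φ.injective
    rw [hlam_coord, hlam_coord]
    have h := congrArg φ (B.mul_add_add a (b * c) (B.neg b))
    rw [hφadd, hφadd, hmul_neg] at h
    have h2 : φ (a * B.add (b * c) (B.neg b)) = φ (a * (b * c)) - φ (a * b) + φ a := by
      have := eq_sub_of_add_eq h
      rw [this]; abel
    show φ (a * b * c) - φ (a * b) = φ (a * (B.add (b * c) (B.neg b))) - φ a
    rw [h2, mul_assoc]
    abel
  have hlam_one : ∀ c : StructureGroup r, B.lam 1 c = c := by
    intro c
    apply φ.injective
    rw [hlam_coord, one_mul, ← hzero_one, h0, sub_zero]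
  have hlam_cancel : ∀ (a : StructureGroup r) c, B.lam a⁻¹ (B.lam a c) = c := by
    intro a c
    rw [← hlam_mul, inv_mul_cancel, hlam_one]
  have hlam_cancel' : ∀ (a : StructureGroup r) c, B.lam a (B.lam a⁻¹ c) = c := by
    intro a c
    rw [← hlam_mul, mul_inv_cancel, hlam_one]
  -- injectivity of iota
  have hι : Function.Injective (iota r) := by
    intro x y h
    have h1 := congrArg φ h
    rw [hφX, hφX] at h1
    exact Finsupp.single_left_injective one_ne_zero h1
  have hσ : ∀ x y : X, B.lam (iota r x) (iota r y) = iota r ((r (x, y)).1) := by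
    intro x y
    have h := congrArg Prod.fst (hcompat x y)
    simpa [LeftBraceOn.rmap] using h
  -- the additive endomorphism induced by lam a
  have hsymm_add : ∀ u v : X →₀ ℤ, φ.symm (u + v) = B.add (φ.symm u) (φ.symm v) := by
    intro u v
    apply φ.injective
    rw [hφadd]
    simp
  let T : StructureGroup r → (X →₀ ℤ) →+ (X →₀ ℤ) := fun a =>
    { toFun := fun v => φ (B.lam a (φ.symm v))
      map_zero' := by
        have hz : φ.symm (0 : X →₀ ℤ) = B.zero := by
          apply φ.injective; rw [h0]; simp
        show φ (B.lam a (φ.symm 0)) = 0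
        rw [hz, hzero_one]
        show φ (B.lam a 1) = 0
        rw [hlam_coord, mul_one, sub_self]
      map_add' := by
        intro u v
        show φ (B.lam a (φ.symm (u + v))) = φ (B.lam a (φ.symm u)) + φ (B.lam a (φ.symm v))
        rw [hsymm_add]
        exact hlam_add a (φ.symm u) (φ.symm v) }
  have hTsingle : ∀ (a : StructureGroup r) (x y : X) (n : ℤ),
      B.lam a (iota r x) = iota r y → T a (Finsupp.single x n) = Finsupp.single y n := by
    intro a x y n h
    have hx1 : φ.symm (Finsupp.single x (1 : ℤ)) = iota r x := by
      apply φ.injective; rw [hφX]; simp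
    have h1 : T a (Finsupp.single x (1 : ℤ)) = Finsupp.single y 1 := by
      show φ (B.lam a (φ.symm (Finsupp.single x (1 : ℤ)))) = Finsupp.single y 1
      rw [hx1, h, hφX]
    calc T a (Finsupp.single x n) = T a (n • Finsupp.single x (1 : ℤ)) := by
            rw [Finsupp.smul_single, smul_eq_mul, mul_one]
      _ = n • T a (Finsupp.single x (1 : ℤ)) := map_zsmul _ _ _
      _ = Finsupp.single y n := by rw [h1, Finsupp.smul_single, smul_eq_mul, mul_one]
  have hTsum : ∀ (a : StructureGroup r) (g : X → X),
      (∀ x, B.lam a (iota r x) = iota r (g x)) →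
      ∀ v : X →₀ ℤ, T a v = v.sum fun x n => Finsupp.single (g x) n := by
    intro a g hg v
    conv_lhs => rw [← Finsupp.sum_single v]
    rw [map_finsuppSum]
    exact Finsupp.sum_congr fun x _ => hTsingle a x (g x) _ (hg x)
  -- the subgroup of elements whose lambda preserves the image of iota
  let S : Subgroup (StructureGroup r) :=
    { carrier := {a | ∀ x : X, ∃ y : X, B.lam a (iota r x) = iota r y}
      one_mem' := fun x => ⟨x, hlam_one _⟩
      mul_mem' := by
        intro a b ha hb x
        obtain ⟨y, hy⟩ := hb x
        obtain ⟨z, hz⟩ := ha y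
        exact ⟨z, by rw [hlam_mul, hy, hz]⟩
      inv_mem' := by
        intro a ha y
        set g : X → X := fun x => (ha x).choose with hgdef
        have hg : ∀ x, B.lam a (iota r x) = iota r (g x) := fun x => (ha x).choose_spec
        set v : X →₀ ℤ := φ (B.lam a⁻¹ (iota r y)) with hv
        have h1 : T a v = Finsupp.single y 1 := by
          show φ (B.lam a (φ.symm v)) = _
          rw [hv, Equiv.symm_apply_apply, hlam_cancel', hφX]
        rw [hTsum a g hg] at h1
        have hy : y ∈ (Finsupp.single y (1 : ℤ)).support := by
          rw [Finsupp.support_single_ne_zero y one_ne_zero]; simp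
        rw [← h1] at hy
        have hy2 := Finsupp.support_sum hy
        rw [Finset.mem_biUnion] at hy2
        obtain ⟨x, _, hx⟩ := hy2
        have hyx : y = g x := by
          have := Finsupp.support_single_subset hx
          simpa using this
        refine ⟨x, ?_⟩
        rw [hyx, ← hg, hlam_cancel] }
  have hStop : ∀ a : StructureGroup r, a ∈ S := by
    have hle : Subgroup.closure (Set.range (iota r)) ≤ S := by
      rw [Subgroup.closure_le]
      rintro _ ⟨x, rfl⟩ y
      exact ⟨(r (x, y)).1, hσ x y⟩
    intro a
    apply hle
    rw [show Set.range (iota r) = Set.range (PresentedGroup.of : X → StructureGroup r) from rfl,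
      PresentedGroup.closure_range_of]
    trivial
  -- the permutation attached to each group element
  let f : StructureGroup r → X → X := fun a x => (hStop a x).choose
  have hf : ∀ a x, B.lam a (iota r x) = iota r (f a x) := fun a x => (hStop a x).choose_spec
  have hf1 : ∀ x, f 1 x = x := by
    intro x
    apply hι
    rw [← hf, hlam_one]
  have hfmul : ∀ a b x, f (a * b) x = f a (f b x) := by
    intro a b x
    apply hι
    rw [← hf, hlam_mul, hf, hf]
  have hli : ∀ a : StructureGroup r, Function.LeftInverse (f a⁻¹) (f a) := by
    intro a x
    rw [← hfmul, inv_mul_cancel, hf1]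
  have hri : ∀ a : StructureGroup r, Function.RightInverse (f a⁻¹) (f a) := by
    intro a x
    rw [← hfmul, mul_inv_cancel, hf1]
  let π : StructureGroup r →* Equiv.Perm X :=
    { toFun := fun a => ⟨f a, f a⁻¹, hli a, hri a⟩
      map_one' := by
        ext x
        exact hf1 x
      map_mul' := by
        intro a b
        ext x
        exact hfmul a b x }
  have hπσ : ∀ x : X, π (iota r x) = Equiv.ofBijective (fun y => (r (x, y)).1) (hnd.1 x) := by
    intro x
    ext y
    show f (iota r x) y = (r (x, y)).1
    apply hι
    rw [← hf, hσ]
  refine ⟨π, hπσ, ?_, ?_⟩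
  · -- range
    have hgen : Subgroup.closure (Set.range (iota r)) = ⊤ :=
      PresentedGroup.closure_range_of (structRels r)
    rw [MonoidHom.range_eq_map, ← hgen, MonoidHom.map_closure]
    congr 1
    rw [← Set.range_comp]
    ext e
    constructor
    · rintro ⟨x, rfl⟩; exact ⟨x, (hπσ x).symm⟩
    · rintro ⟨x, rfl⟩; exact ⟨x, hπσ x⟩
  · -- kernel
    ext a
    simp only [SetLike.mem_coe, MonoidHom.mem_ker, Set.mem_setOf_eq]
    constructor
    · intro ha c
      have hfix : ∀ x, B.lam a (iota r x) = iota r x := by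
        intro x
        have hx : f a x = x := congrFun (congrArg (fun e : Equiv.Perm X => (e : X → X)) ha) x
        rw [hf, hx]
      have hT : ∀ v : X →₀ ℤ, T a v = v := by
        intro v
        rw [hTsum a id hfix]
        exact Finsupp.sum_single v
      apply φ.injective
      have := hT (φ c)
      rwa [show T a (φ c) = φ (B.lam a (φ.symm (φ c))) from rfl,
        Equiv.symm_apply_apply] at this
    · intro ha
      ext x
      show f a x = x
      apply hι
      rw [← hf, ha]
end
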